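/- arXiv:math/0009241 — 6 statements merged into one kernel-verified Lean document; each statement's English description precedes it below -/
import Mathlib

section
/- Let L be the set of covectors of an oriented matroid on a finite set E and let g ∈ E. Call a pair (A,B) of subsets of E∖{g} a face if there is no covector Z ∈ L with Z_g = +, Z⁺ ⊆ A ∪ {g}, and Z⁻ ⊆ B. Then for every face (A,B) and every element i ∈ E∖{g}, at least one of (A ∪ {i}, B) and (A, B ∪ {i}) is a face. Equivalently: if there exist covectors Z', Z'' ∈ L with Z'_g = +, Z'_i = +, (Z')⁺ ⊆ A ∪ {i,g}, (Z')⁻ ⊆ B and Z''_g = +, Z''_i = −, (Z'')⁺ ⊆ A ∪ {g}, (Z'')⁻ ⊆ B ∪ {i}, then there exists a covector Z ∈ L with Z_g = +, Z_i = 0, Z⁺ ⊆ A ∪ {g}, and Z⁻ ⊆ B. -/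
/-- Let `L` be the set of covectors of an oriented matroid on `E`
(axioms: zero, symmetry, composition, elimination), and let `g ∈ E`.  If there are covectors
`Z', Z'' ∈ L` with `Z'_g = +`, `Z'_i = +`, `(Z')⁺ ⊆ A ∪ {i,g}`, `(Z')⁻ ⊆ B` and
`Z''_g = +`, `Z''_i = −`, `(Z'')⁺ ⊆ A ∪ {g}`, `(Z'')⁻ ⊆ B ∪ {i}`, then there is a covector
`Z ∈ L` with `Z_g = +`, `Z_i = 0`, `Z⁺ ⊆ A ∪ {g}` and `Z⁻ ⊆ B`.  (Sign vectors are maps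
`E → SignType`, with `+` = `1`, `−` = `-1`.) -/
theorem oriented_matroid_face_elimination {E : Type*} (L : Set (E → SignType)) (g : E)
    -- (1) the zero sign vector is a covector
    (h_zero : (fun _ => 0 : E → SignType) ∈ L)
    -- (2) symmetry
    (h_symm : ∀ X ∈ L, (fun e => -X e) ∈ L)
    -- (3) composition
    (h_comp : ∀ X ∈ L, ∀ Y ∈ L, (fun e => if X e ≠ 0 then X e else Y e) ∈ L)
    -- (4) elimination
    (h_elim : ∀ X ∈ L, ∀ Y ∈ L, ∀ e : E, X e = -Y e → X e ≠ 0 →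
      ∃ Z ∈ L, Z e = 0 ∧ ∀ f : E, ¬(X f = -Y f ∧ X f ≠ 0) →
        Z f = if X f ≠ 0 then X f else Y f)
    (A B : Set E) (hgA : g ∉ A) (hgB : g ∉ B) (i : E) (hig : i ≠ g)
    (Z' : E → SignType) (hZ' : Z' ∈ L)
    (hZ'g : Z' g = 1) (hZ'i : Z' i = 1)
    (hZ'pos : {e | Z' e = 1} ⊆ A ∪ {i, g}) (hZ'neg : {e | Z' e = -1} ⊆ B)
    (Z'' : E → SignType) (hZ'' : Z'' ∈ L)
    (hZ''g : Z'' g = 1) (hZ''i : Z'' i = -1)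
    (hZ''pos : {e | Z'' e = 1} ⊆ A ∪ {g}) (hZ''neg : {e | Z'' e = -1} ⊆ B ∪ {i}) :
    ∃ Z ∈ L, Z g = 1 ∧ Z i = 0 ∧ {e | Z e = 1} ⊆ A ∪ {g} ∧ {e | Z e = -1} ⊆ B := by
  obtain ⟨Z, hZL, hZi, hZf⟩ := h_elim Z' hZ' Z'' hZ'' i (by rw [hZ'i, hZ''i]; rfl)
    (by rw [hZ'i]; decide)
  have hab : ∀ f, f ≠ i → (Z' f = -Z'' f ∧ Z' f ≠ 0) → f ∈ A ∧ f ∈ B := by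
    intro f hfi ⟨h1, h2⟩
    have hfg : f ≠ g := by
      rintro rfl; rw [hZ'g, hZ''g] at h1; exact absurd h1 (by decide)
    cases h : Z' f with
    | zero => exact absurd h h2
    | neg =>
      have hB : f ∈ B := hZ'neg h
      rw [h] at h1
      have h3 : Z'' f = 1 := by
        cases h' : Z'' f with
        | zero => rw [h'] at h1; exact absurd h1 (by decide)
        | neg => rw [h'] at h1; exact absurd h1 (by decide)
        | pos => rfl
      rcases hZ''pos h3 with hA | hg
      · exact ⟨hA, hB⟩
      · exact absurd hg hfg
    | pos =>
      have hA : f ∈ A := by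
        rcases hZ'pos h with hA | hig'
        · exact hA
        · rcases hig' with h' | h' <;> [exact absurd h' hfi; exact absurd h' hfg]
      rw [h] at h1
      have h3 : Z'' f = -1 := by
        cases h' : Z'' f with
        | zero => rw [h'] at h1; exact absurd h1 (by decide)
        | neg => rfl
        | pos => rw [h'] at h1; exact absurd h1 (by decide)
      rcases hZ''neg h3 with hB | hi'
      · exact ⟨hA, hB⟩
      · exact absurd hi' hfi
  have hZg : Z g = 1 := by
    have := hZf g (by rw [hZ'g, hZ''g]; rintro ⟨h, -⟩; exact absurd h (by decide))
    rw [this, hZ'g]; simp [hZ'g]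
  refine ⟨Z, hZL, hZg, hZi, ?_, ?_⟩
  · intro f hf
    simp only [Set.mem_setOf_eq] at hf
    by_cases hfi : f = i
    · subst hfi; rw [hZi] at hf; exact absurd hf (by decide)
    by_cases hsep : Z' f = -Z'' f ∧ Z' f ≠ 0
    · exact Or.inl (hab f hfi hsep).1
    · have := hZf f hsep
      rw [this] at hf
      by_cases h0 : Z' f ≠ 0
      · rw [if_pos h0] at hf
        rcases hZ'pos hf with hA | hig'
        · exact Or.inl hA
        · rcases hig' with h' | h' <;> [exact absurd h' hfi; exact Or.inr h']
      · rw [if_neg h0] at hf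
        exact hZ''pos hf
  · intro f hf
    simp only [Set.mem_setOf_eq] at hf
    by_cases hfi : f = i
    · subst hfi; rw [hZi] at hf; exact absurd hf (by decide)
    by_cases hsep : Z' f = -Z'' f ∧ Z' f ≠ 0
    · exact (hab f hfi hsep).2
    · have := hZf f hsep
      rw [this] at hf
      by_cases h0 : Z' f ≠ 0
      · rw [if_pos h0] at hf; exact hZ'neg hf
      · rw [if_neg h0] at hf
        rcases hZ''neg hf with hB | hi'
        · exact hB
        · exact absurd hi' hfi
end

section
/- Let M be a matroid with finite ground set E = {1,…,n} and let I_M be its matroid ideal in k[x_1,…,x_n]. Then I_M equals the intersection, over all bases B of M, of the monomial prime ideals generated by {x_i : i ∈ B}. -/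
/-!
Both ideals are squarefree monomial ideals, so it suffices to compare the exponent vectors `m`
of the monomials they contain. Put `Z = {i | m i = 0}`. The monomial `x^m` lies in every
`⟨x_i : i ∈ B⟩` iff no basis is contained in `Z`, i.e. iff `Z` is not spanning; and `x^m` is a
multiple of some `∏_{i ∉ F} x_i` with `F` a proper flat iff `Z` lies in a proper flat, which
again means that `Z` is not spanning (take `F = cl Z`).
-/

open Finset

attribute [local instance] Classical.propDecidable

/-- The matroid ideal of a matroid `M` on ground set `{1,…,n}` (here `Fin n`): the ideal of
`k[x_1,…,x_n]` generated by the monomials `∏_{i ∉ F} x_i` for the proper flats `F` of `M`. -/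
noncomputable def matroidIdeal (n : ℕ) (k : Type*) [Field k] (M : Matroid (Fin n)) :
    Ideal (MvPolynomial (Fin n) k) :=
  Ideal.span {m | ∃ F : Set (Fin n), M.IsFlat F ∧ F ≠ Set.univ ∧
    m = ∏ i ∈ Finset.univ.filter (fun i => i ∉ F), MvPolynomial.X i}

namespace Matroid

variable {α : Type*} {M : Matroid α} {X : Set α}

lemma not_spanning_iff_exists_isFlat_superset (hX : X ⊆ M.E := by aesop_mat) :
    ¬ M.Spanning X ↔ ∃ F, M.IsFlat F ∧ F ≠ M.E ∧ X ⊆ F := by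
  refine ⟨fun h ↦ ⟨M.closure X, M.isFlat_closure X,
    ((not_spanning_iff_closure_ssubset hX).1 h).ne, M.subset_closure X⟩, ?_⟩
  rintro ⟨F, hF, hFE, hXF⟩ hXs
  exact hFE (hF.closure ▸ hXs.closure_eq_of_superset hXF)

lemma not_spanning_iff_forall_isBase_not_subset (hX : X ⊆ M.E := by aesop_mat) :
    ¬ M.Spanning X ↔ ∀ B, M.IsBase B → ¬ B ⊆ X := by
  rw [spanning_iff_exists_isBase_subset]
  push Not
  rfl

end Matroid

namespace MvPolynomial

variable {σ R ι : Type*} [CommSemiring R]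

theorem prod_X_eq_monomial (t : Finset σ) :
    ∏ i ∈ t, (X i : MvPolynomial σ R) = monomial (∑ i ∈ t, Finsupp.single i 1) 1 :=
  (monomial_sum_one t _).symm

theorem mem_ideal_span_prod_X_image {p : MvPolynomial σ R} {t : ι → Finset σ} {s : Set ι} :
    p ∈ Ideal.span ((fun j ↦ ∏ i ∈ t j, X i) '' s) ↔
      ∀ m ∈ p.support, ∃ j ∈ s, ∀ i ∈ t j, m i ≠ 0 := by
  simp_rw [prod_X_eq_monomial]
  rw [← Set.image_image (fun d ↦ monomial d (1 : R)), mem_ideal_span_monomial_image]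
  simp only [Set.exists_mem_image]
  refine forall₂_congr fun m _ ↦ exists_congr fun j ↦ and_congr_right fun _ ↦ ?_
  simp only [Finsupp.le_def, Finsupp.finsetSum_apply, Finsupp.single_apply, Finset.sum_ite_eq']
  exact forall_congr' fun i ↦ by split_ifs with hi <;> simp [hi, Nat.one_le_iff_ne_zero]

end MvPolynomial

open MvPolynomial

lemma mem_matroidIdeal_iff {n : ℕ} {k : Type*} [Field k] {M : Matroid (Fin n)}
    {p : MvPolynomial (Fin n) k} :
    p ∈ matroidIdeal n k M ↔
      ∀ m ∈ p.support, ∃ F, M.IsFlat F ∧ F ≠ Set.univ ∧ {i | m i = 0} ⊆ F := by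
  have hgen : {m | ∃ F : Set (Fin n), M.IsFlat F ∧ F ≠ Set.univ ∧
      m = ∏ i ∈ univ.filter (fun i => i ∉ F), (X i : MvPolynomial (Fin n) k)} =
      (fun F ↦ ∏ i ∈ univ.filter (fun i => i ∉ F), X i) '' {F | M.IsFlat F ∧ F ≠ Set.univ} := by
    ext; simp [eq_comm, and_assoc]
  rw [matroidIdeal, hgen, mem_ideal_span_prod_X_image]
  simp only [Set.mem_ofPred_eq, mem_filter, mem_univ, true_and, Set.subset_def, not_imp_not,
    and_assoc]

lemma mem_iInf_span_X_isBase_iff {σ R : Type*} [CommSemiring R] {M : Matroid σ}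
    {p : MvPolynomial σ R} :
    p ∈ ⨅ (B : Set σ) (_ : M.IsBase B), Ideal.span {m | ∃ i ∈ B, m = (X i : MvPolynomial σ R)} ↔
      ∀ m ∈ p.support, ∀ B, M.IsBase B → ¬ B ⊆ {i | m i = 0} := by
  have hgen (B : Set σ) : {m | ∃ i ∈ B, m = (X i : MvPolynomial σ R)} = X '' B := by
    ext; simp [eq_comm]
  simp only [Ideal.mem_iInf, hgen, mem_ideal_span_X_image, Set.not_subset, Set.mem_ofPred_eq]
  exact ⟨fun h m hm B hB ↦ h B hB m hm, fun h B hB m hm ↦ h m hm B hB⟩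

/-- the matroid ideal `I_M` equals the intersection, over all bases `B` of `M`, of
the monomial primes `⟨x_i : i ∈ B⟩`. -/
theorem matroidIdeal_eq_iInf_bases (n : ℕ) (k : Type*) [Field k] (M : Matroid (Fin n))
    (hE : M.E = Set.univ) :
    matroidIdeal n k M =
      ⨅ (B : Set (Fin n)) (_ : M.IsBase B),
        Ideal.span {m | ∃ i ∈ B, m = (MvPolynomial.X i : MvPolynomial (Fin n) k)} := by
  ext p
  rw [mem_matroidIdeal_iff, mem_iInf_span_X_isBase_iff]
  refine forall₂_congr fun m _ ↦ ?_
  have hm : {i | m i = 0} ⊆ M.E := hE ▸ Set.subset_univ _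
  rw [← Matroid.not_spanning_iff_forall_isBase_not_subset hm,
    Matroid.not_spanning_iff_exists_isFlat_superset hm, hE]
end

section
/- Let L be a finite geometric lattice of rank r and let h be an atom of L. Then ψ_L(q) = ψ_{[h,1̂]}(q) + q · Σ_c ψ_{[0̂,c]}(q), where the sum ranges over all coatoms c of L with h ≰ c. -/
open Finset Polynomial

attribute [local instance] Classical.propDecidable
attribute [local instance] Fintype.toLocallyFiniteOrder

section Aux
variable {L : Type*} [Lattice L] [Fintype L]

lemma sum_Icc_mu_left (a b : L) (hab : a ≤ b) :
    ∑ x ∈ Finset.Icc a b, IncidenceAlgebra.mu ℤ a x = if a = b then 1 else 0 := by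
  rcases eq_or_ne a b with rfl | hne
  · simp
  · rw [if_neg hne, ← Finset.Ico_insert_right hab, Finset.sum_insert Finset.right_notMem_Ico,
      IncidenceAlgebra.mu_eq_neg_sum_Ico_of_ne hne]
    ring

lemma sum_Icc_mu_right (a b : L) (hab : a ≤ b) :
    ∑ x ∈ Finset.Icc a b, IncidenceAlgebra.mu ℤ x b = if a = b then 1 else 0 := by
  rcases eq_or_ne a b with rfl | hne
  · simp
  · rw [if_neg hne, ← Finset.Ioc_insert_left hab, Finset.sum_insert Finset.left_notMem_Ioc,
      IncidenceAlgebra.mu_eq_neg_sum_Ioc_of_ne hne]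
    ring

lemma weisner (F a b : L) (hFa : F < a) (hab : a ≤ b) :
    ∑ x ∈ (Finset.Icc F b).filter (fun x => x ⊔ a = b), IncidenceAlgebra.mu ℤ F x = 0 := by
  have hFb : F ≤ b := hFa.le.trans hab
  calc ∑ x ∈ (Finset.Icc F b).filter (fun x => x ⊔ a = b), IncidenceAlgebra.mu ℤ F x
      = ∑ x ∈ Finset.Icc F b, if x ⊔ a = b then IncidenceAlgebra.mu ℤ F x else 0 :=
        Finset.sum_filter _ _
    _ = ∑ x ∈ Finset.Icc F b,
          IncidenceAlgebra.mu ℤ F x * ∑ y ∈ Finset.Icc (x ⊔ a) b, IncidenceAlgebra.mu ℤ y b := by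
        refine Finset.sum_congr rfl fun x hx => ?_
        rw [sum_Icc_mu_right _ _ (sup_le (Finset.mem_Icc.mp hx).2 hab)]
        by_cases hxa : x ⊔ a = b <;> simp [hxa]
    _ = ∑ x ∈ Finset.Icc F b, ∑ y ∈ Finset.Icc F b,
          if x ≤ y ∧ a ≤ y then IncidenceAlgebra.mu ℤ F x * IncidenceAlgebra.mu ℤ y b else 0 := by
        refine Finset.sum_congr rfl fun x hx => ?_
        have hset : Finset.Icc (x ⊔ a) b = (Finset.Icc F b).filter (fun y => x ≤ y ∧ a ≤ y) := by
          ext y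
          simp only [Finset.mem_Icc, Finset.mem_filter, sup_le_iff]
          exact ⟨fun ⟨⟨h1, h2⟩, h3⟩ => ⟨⟨(Finset.mem_Icc.mp hx).1.trans h1, h3⟩, h1, h2⟩,
            fun ⟨⟨_, h3⟩, h1, h2⟩ => ⟨⟨h1, h2⟩, h3⟩⟩
        rw [hset, Finset.sum_filter, Finset.mul_sum]
        refine Finset.sum_congr rfl fun y _ => ?_
        by_cases hcond : x ≤ y ∧ a ≤ y <;> simp [hcond]
    _ = ∑ y ∈ Finset.Icc F b, ∑ x ∈ Finset.Icc F b,
          if x ≤ y ∧ a ≤ y then IncidenceAlgebra.mu ℤ F x * IncidenceAlgebra.mu ℤ y b else 0 :=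
        Finset.sum_comm
    _ = 0 := by
        refine Finset.sum_eq_zero fun y hy => ?_
        by_cases hay : a ≤ y
        · have hset : (Finset.Icc F b).filter (fun x => x ≤ y) = Finset.Icc F y := by
            ext x
            simp only [Finset.mem_Icc, Finset.mem_filter]
            exact ⟨fun ⟨⟨h1, _⟩, h3⟩ => ⟨h1, h3⟩,
              fun ⟨h1, h3⟩ => ⟨⟨h1, h3.trans (Finset.mem_Icc.mp hy).2⟩, h3⟩⟩
          have : ∑ x ∈ Finset.Icc F b,
              (if x ≤ y ∧ a ≤ y then IncidenceAlgebra.mu ℤ F x * IncidenceAlgebra.mu ℤ y b else 0)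
              = (∑ x ∈ Finset.Icc F y, IncidenceAlgebra.mu ℤ F x) * IncidenceAlgebra.mu ℤ y b := by
            rw [← hset, Finset.sum_filter, Finset.sum_mul]
            refine Finset.sum_congr rfl fun x _ => ?_
            by_cases hxy : x ≤ y <;> simp [hxy, hay]
          rw [this, sum_Icc_mu_left _ _ (Finset.mem_Icc.mp hy).1,
            if_neg (by rintro rfl; exact absurd hay (not_le_of_gt hFa)), zero_mul]
        · exact Finset.sum_eq_zero fun x _ => by simp [hay]

end Aux

section Aux2
variable {L : Type*} [Lattice L] [Fintype L]

lemma rk_lt_of_lt (rk : L → ℕ) (hrk_cov : ∀ a b : L, a ⋖ b → rk b = rk a + 1) :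
    ∀ b a : L, a < b → rk a < rk b := by
  intro b
  induction b using (wellFounded_lt (α := L)).induction with
  | _ b IH =>
    intro a hab
    obtain ⟨x, hax, hxb⟩ := hab.exists_le_covby
    have hb := hrk_cov _ _ hxb
    rcases eq_or_lt_of_le hax with rfl | h
    · omega
    · have := IH x hxb.lt a h
      omega

lemma rk_le_of_le (rk : L → ℕ) (hrk_cov : ∀ a b : L, a ⋖ b → rk b = rk a + 1)
    {a b : L} (hab : a ≤ b) : rk a ≤ rk b := by
  rcases eq_or_lt_of_le hab with rfl | h
  · exact le_rfl
  · exact (rk_lt_of_lt rk hrk_cov b a h).le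

variable [BoundedOrder L]

lemma exists_atom_le_not_le (hatomistic : ∀ x : L, ∃ s : Finset L,
    (∀ a ∈ s, IsAtom a) ∧ x = s.sup id) {x F : L} (hxF : ¬ x ≤ F) :
    ∃ a : L, IsAtom a ∧ a ≤ x ∧ ¬ a ≤ F := by
  obtain ⟨s, hs, hx⟩ := hatomistic x
  by_contra H
  push_neg at H
  refine hxF ?_
  rw [hx]
  exact Finset.sup_le fun a ha =>
    H a (hs a ha) (hx ▸ Finset.le_sup (f := id) ha)

variable [IsWeakUpperModularLattice L]

lemma covby_sup_atom (hatomistic : ∀ x : L, ∃ s : Finset L,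
    (∀ a ∈ s, IsAtom a) ∧ x = s.sup id) :
    ∀ x h : L, IsAtom h → ¬ h ≤ x → x ⋖ x ⊔ h := by
  intro x
  induction x using (wellFounded_lt (α := L)).induction with
  | _ x IH =>
    intro h hh hhx
    rcases eq_or_ne x ⊥ with rfl | hxbot
    · simpa using hh.bot_covBy
    -- pick y ⋖ x
    obtain ⟨y, -, hyx⟩ := (bot_lt_iff_ne_bot.mpr hxbot).exists_le_covby
    -- pick an atom a ≤ x with a ≰ y
    obtain ⟨a, ha, hax, hay⟩ := exists_atom_le_not_le hatomistic (fun hxy => hyx.lt.not_ge hxy)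
    have hxya : x = y ⊔ a := by
      refine le_antisymm ?_ (sup_le hyx.lt.le hax)
      rcases (hyx.eq_or_eq (le_sup_left : y ≤ y ⊔ a) (sup_le hyx.lt.le hax)) with hxe | hxe
      · exact absurd (le_sup_right.trans hxe.le) hay
      · exact hxe.ge
    have hhy : ¬ h ≤ y := fun hl => hhx (hl.trans hyx.lt.le)
    have hcovyh : y ⋖ y ⊔ h := IH y hyx.lt h hh hhy
    have hmeet : x ⊓ (y ⊔ h) = y := by
      rcases hyx.eq_or_eq (le_inf hyx.lt.le le_sup_left) inf_le_left with he | he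
      · exact he
      · exfalso
        have hxle : x ≤ y ⊔ h := he ▸ inf_le_right
        have hxlt : x < y ⊔ h := lt_of_le_of_ne hxle
          (fun hxe => hhx (hxe ▸ le_sup_right))
        exact hcovyh.2 hyx.lt hxlt
    have hcov1 : x ⊓ (y ⊔ h) ⋖ x := by rw [hmeet]; exact hyx
    have hcov2 : x ⊓ (y ⊔ h) ⋖ y ⊔ h := by rw [hmeet]; exact hcovyh
    have := IsWeakUpperModularLattice.covBy_sup_of_inf_covBy_covBy hcov1 hcov2
    have hsup : x ⊔ (y ⊔ h) = x ⊔ h := by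
      rw [← sup_assoc, sup_eq_left.mpr hyx.lt.le]
    rwa [hsup] at this

end Aux2

section Aux3
variable {L : Type*} [Lattice L] [Fintype L] [BoundedOrder L] [IsWeakUpperModularLattice L]

lemma abs_eq_pow_mul {n : ℕ} {z : ℤ} (hz : 0 ≤ (-1 : ℤ) ^ n * z) : |z| = (-1 : ℤ) ^ n * z := by
  have h1 : |(-1 : ℤ) ^ n * z| = |z| := by
    rw [abs_mul, abs_pow, abs_neg, abs_one, one_pow, one_mul]
  rw [← h1, abs_of_nonneg hz]

lemma mu_sign (hatomistic : ∀ x : L, ∃ s : Finset L, (∀ a ∈ s, IsAtom a) ∧ x = s.sup id)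
    (rk : L → ℕ) (hrk_cov : ∀ a b : L, a ⋖ b → rk b = rk a + 1) :
    ∀ b F : L, F ≤ b → 0 ≤ (-1 : ℤ) ^ (rk b - rk F) * IncidenceAlgebra.mu ℤ F b := by
  intro b
  induction b using (wellFounded_lt (α := L)).induction with
  | _ b IH =>
    intro F hFb
    rcases eq_or_lt_of_le hFb with rfl | hFb'
    · simp
    obtain ⟨h₀, hh₀, hh₀b, hh₀F⟩ := exists_atom_le_not_le hatomistic hFb'.not_ge
    set a := F ⊔ h₀ with ha
    have hFa : F < a := lt_of_le_of_ne le_sup_left (fun he => hh₀F (he ▸ le_sup_right))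
    have hab : a ≤ b := sup_le hFb hh₀b
    have hw := weisner F a b hFa hab
    set S := (Finset.Icc F b).filter (fun x => x ⊔ a = b) with hS
    have hbS : b ∈ S := by
      simp [hS, Finset.mem_Icc, hFb, sup_eq_left.mpr hab]
    have hsplit : ∑ x ∈ S.erase b, IncidenceAlgebra.mu ℤ F x + IncidenceAlgebra.mu ℤ F b = 0 := by
      rw [Finset.sum_erase_add _ _ hbS]; exact hw
    have hmu : IncidenceAlgebra.mu ℤ F b = -∑ x ∈ S.erase b, IncidenceAlgebra.mu ℤ F x := by
      omega
    have hfacts : ∀ x ∈ S.erase b, F ≤ x ∧ x ⋖ b := by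
      intro x hx
      obtain ⟨hxb, hxS⟩ := Finset.mem_erase.mp hx
      obtain ⟨hxI, hxa⟩ := Finset.mem_filter.mp hxS
      obtain ⟨hFx, hxleb⟩ := Finset.mem_Icc.mp hxI
      have hxh : x ⊔ a = x ⊔ h₀ := by
        rw [ha, ← sup_assoc, sup_eq_left.mpr hFx]
      have hh₀x : ¬ h₀ ≤ x := by
        intro hle
        rw [hxh, sup_eq_left.mpr hle] at hxa
        exact hxb hxa
      have := covby_sup_atom hatomistic x h₀ hh₀ hh₀x
      rw [← hxh, hxa] at this
      exact ⟨hFx, this⟩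
    have key : (-1 : ℤ) ^ (rk b - rk F) * IncidenceAlgebra.mu ℤ F b
        = ∑ x ∈ S.erase b, (-1 : ℤ) ^ (rk x - rk F) * IncidenceAlgebra.mu ℤ F x := by
      rw [hmu, mul_neg, Finset.mul_sum, ← Finset.sum_neg_distrib]
      refine Finset.sum_congr rfl fun x hx => ?_
      obtain ⟨hFx, hcov⟩ := hfacts x hx
      have h1 : rk b = rk x + 1 := hrk_cov _ _ hcov
      have h2 : rk F ≤ rk x := rk_le_of_le rk hrk_cov hFx
      have h3 : rk b - rk F = (rk x - rk F) + 1 := by omega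
      rw [h3, pow_succ]
      ring
    rw [key]
    refine Finset.sum_nonneg fun x hx => ?_
    obtain ⟨hFx, hcov⟩ := hfacts x hx
    exact IH x hcov.lt F hFx

end Aux3

section Aux4
variable {L : Type*} [Lattice L] [Fintype L] [BoundedOrder L] [IsWeakUpperModularLattice L]

lemma mu_key (hatomistic : ∀ x : L, ∃ s : Finset L, (∀ a ∈ s, IsAtom a) ∧ x = s.sup id)
    (rk : L → ℕ) (hrk_cov : ∀ a b : L, a ⋖ b → rk b = rk a + 1)
    (h : L) (hh : IsAtom h) (F : L) (hF : ¬ h ≤ F) :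
    |IncidenceAlgebra.mu ℤ F ⊤| =
      ∑ c ∈ Finset.univ.filter (fun c : L => IsCoatom c ∧ ¬ h ≤ c),
        if F ≤ c then |IncidenceAlgebra.mu ℤ F c| else 0 := by
  have hFne : F ≠ ⊤ := fun he => hF (he ▸ le_top)
  set a := F ⊔ h with ha
  have hFa : F < a := lt_of_le_of_ne le_sup_left (fun he => hF (he ▸ le_sup_right))
  have hw := weisner F a ⊤ hFa le_top
  set S := (Finset.Icc F ⊤).filter (fun x => x ⊔ a = ⊤) with hS
  have htS : (⊤ : L) ∈ S := by
    simp [hS, Finset.mem_Icc]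
  have hsplit : ∑ x ∈ S.erase ⊤, IncidenceAlgebra.mu ℤ F x + IncidenceAlgebra.mu ℤ F ⊤ = 0 := by
    rw [Finset.sum_erase_add _ _ htS]; exact hw
  have hmu : IncidenceAlgebra.mu ℤ F ⊤ = -∑ x ∈ S.erase ⊤, IncidenceAlgebra.mu ℤ F x := by
    omega
  have hsupeq : ∀ c : L, F ≤ c → c ⊔ a = c ⊔ h := fun c hFc => by
    rw [ha, ← sup_assoc, sup_eq_left.mpr hFc]
  have hset : S.erase ⊤ =
      (Finset.univ.filter (fun c : L => IsCoatom c ∧ ¬ h ≤ c)).filter (fun c => F ≤ c) := by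
    ext c
    simp only [Finset.mem_erase, hS, Finset.mem_filter, Finset.mem_Icc, Finset.mem_univ,
      true_and, le_top, and_true]
    constructor
    · rintro ⟨hcne, hFc, hca⟩
      rw [hsupeq c hFc] at hca
      have hhc : ¬ h ≤ c := by
        intro hle
        rw [sup_eq_left.mpr hle] at hca
        exact hcne hca
      have hcov := covby_sup_atom hatomistic c h hh hhc
      rw [hca] at hcov
      exact ⟨⟨hcov.isCoatom, hhc⟩, hFc⟩
    · rintro ⟨⟨hc, hhc⟩, hFc⟩
      have hlt : c < c ⊔ h := lt_of_le_of_ne le_sup_left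
        (fun he => hhc (he ▸ le_sup_right))
      exact ⟨hc.1, hFc, by rw [hsupeq c hFc]; exact hc.2 _ hlt⟩
  have hfacts : ∀ c ∈ S.erase ⊤, F ≤ c ∧ c ⋖ ⊤ := by
    intro c hc
    rw [hset] at hc
    obtain ⟨⟨hco, -⟩, hFc⟩ := by
      simpa only [Finset.mem_filter, Finset.mem_univ, true_and] using hc
    exact ⟨hFc, hco.covBy_top⟩
  calc |IncidenceAlgebra.mu ℤ F ⊤|
      = (-1 : ℤ) ^ (rk ⊤ - rk F) * IncidenceAlgebra.mu ℤ F ⊤ :=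
        abs_eq_pow_mul (mu_sign hatomistic rk hrk_cov ⊤ F le_top)
    _ = ∑ c ∈ S.erase ⊤, (-1 : ℤ) ^ (rk c - rk F) * IncidenceAlgebra.mu ℤ F c := by
        rw [hmu, mul_neg, Finset.mul_sum, ← Finset.sum_neg_distrib]
        refine Finset.sum_congr rfl fun c hc => ?_
        obtain ⟨hFc, hcov⟩ := hfacts c hc
        have h1 : rk ⊤ = rk c + 1 := hrk_cov _ _ hcov
        have h2 : rk F ≤ rk c := rk_le_of_le rk hrk_cov hFc
        have h3 : rk ⊤ - rk F = (rk c - rk F) + 1 := by omega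
        rw [h3, pow_succ]; ring
    _ = ∑ c ∈ S.erase ⊤, |IncidenceAlgebra.mu ℤ F c| := by
        refine Finset.sum_congr rfl fun c hc => ?_
        obtain ⟨hFc, _⟩ := hfacts c hc
        exact (abs_eq_pow_mul (mu_sign hatomistic rk hrk_cov c F hFc)).symm
    _ = ∑ c ∈ Finset.univ.filter (fun c : L => IsCoatom c ∧ ¬ h ≤ c),
          if F ≤ c then |IncidenceAlgebra.mu ℤ F c| else 0 := by
        rw [hset, Finset.sum_filter]

end Aux4

/-- The cocharacteristic polynomial of the interval `[a,b]` of a finite lattice `L`, with respect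
to a rank function `rk`:  `ψ_{[a,b]}(q) = Σ_{F ∈ [a,b]} |μ(F,b)|·q^{rk(b)−rk(F)}`, where `μ` is
the Möbius function of `L`. -/
noncomputable def cochar {L : Type*} [Lattice L] [Fintype L] (rk : L → ℕ) (a b : L) :
    Polynomial ℤ :=
  ∑ F ∈ Finset.Icc a b, C |IncidenceAlgebra.mu ℤ F b| * X ^ (rk b - rk F)

/-- in a finite geometric lattice `L` (finite, atomistic, semimodular) of rank `r`,
for any atom `h`:  `ψ_L(q) = ψ_{[h,1̂]}(q) + q · Σ_c ψ_{[0̂,c]}(q)`, the sum being over all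
coatoms `c` of `L` with `h ≰ c`. -/
theorem cochar_recurrence {L : Type*} [Lattice L] [Fintype L] [BoundedOrder L]
    [IsWeakUpperModularLattice L]
    (hatomistic : ∀ x : L, ∃ s : Finset L, (∀ a ∈ s, IsAtom a) ∧ x = s.sup id)
    (r : ℕ) (rk : L → ℕ) (hrk_bot : rk ⊥ = 0) (hrk_top : rk ⊤ = r)
    (hrk_cov : ∀ a b : L, a ⋖ b → rk b = rk a + 1)
    (h : L) (hh : IsAtom h) :
    cochar rk (⊥ : L) ⊤ =
      cochar rk h ⊤ +
        X * ∑ c ∈ Finset.univ.filter (fun c : L => IsCoatom c ∧ ¬ h ≤ c), cochar rk ⊥ c := by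
  subst hrk_top
  set S₀ := Finset.univ.filter (fun c : L => IsCoatom c ∧ ¬ h ≤ c) with hS₀
  have hco : ∀ c ∈ S₀, c ⋖ ⊤ := fun c hc => ((Finset.mem_filter.mp hc).2.1).covBy_top
  have hIccbot : ∀ c : L, Finset.Icc (⊥ : L) c = Finset.univ.filter (fun G => G ≤ c) := by
    intro c; ext G; simp
  have hIccfull : Finset.Icc (⊥ : L) (⊤ : L) = Finset.univ := by ext G; simp
  have hIcch : Finset.Icc h (⊤ : L) = Finset.univ.filter (fun F => h ≤ F) := by
    ext F; simp
  unfold cochar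
  rw [hIccfull, hIcch, Finset.sum_filter, Finset.mul_sum]
  have hsecond : ∀ c ∈ S₀,
      (X : Polynomial ℤ) * ∑ G ∈ Finset.Icc (⊥ : L) c,
          C |IncidenceAlgebra.mu ℤ G c| * X ^ (rk c - rk G)
      = ∑ G ∈ Finset.univ,
          if G ≤ c then C |IncidenceAlgebra.mu ℤ G c| * X ^ (rk ⊤ - rk G) else 0 := by
    intro c hc
    rw [hIccbot, Finset.sum_filter, Finset.mul_sum]
    refine Finset.sum_congr rfl fun G _ => ?_
    by_cases hGc : G ≤ c
    · simp only [hGc, if_true]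
      have h1 : rk ⊤ = rk c + 1 := hrk_cov _ _ (hco c hc)
      have h2 : rk G ≤ rk c := rk_le_of_le rk hrk_cov hGc
      have h3 : rk ⊤ - rk G = (rk c - rk G) + 1 := by omega
      rw [h3, pow_succ]; ring
    · simp [hGc]
  rw [Finset.sum_congr rfl hsecond, Finset.sum_comm, ← Finset.sum_add_distrib]
  refine Finset.sum_congr rfl fun F _ => ?_
  by_cases hhF : h ≤ F
  · rw [if_pos hhF, Finset.sum_eq_zero, add_zero]
    intro c hc
    have : ¬ F ≤ c := fun hFc => (Finset.mem_filter.mp hc).2.2 (hhF.trans hFc)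
    rw [if_neg this]
  · rw [if_neg hhF, zero_add]
    have hkey := mu_key hatomistic rk hrk_cov h hh F hhF
    calc (C |IncidenceAlgebra.mu ℤ F ⊤| : Polynomial ℤ) * X ^ (rk ⊤ - rk F)
        = C (∑ c ∈ S₀, if F ≤ c then |IncidenceAlgebra.mu ℤ F c| else 0)
            * X ^ (rk ⊤ - rk F) := by rw [← hkey]
      _ = ∑ c ∈ S₀,
            (if F ≤ c then C |IncidenceAlgebra.mu ℤ F c| * X ^ (rk ⊤ - rk F) else 0) := by
          rw [map_sum, Finset.sum_mul]
          refine Finset.sum_congr rfl fun c _ => ?_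
          by_cases hFc : F ≤ c <;> simp [hFc]
end

section
/- Define integers μ_n^{(k)} for all n ≥ 0 and k ≥ 1 by μ_0^{(k)} = 1 and, for n ≥ 1, μ_n^{(k)} = (k−1)·μ_{n−1}^{(k+1)} + k·Σ_{j=2}^{n} (∏_{s=1}^{j−1} (n−s))·μ_{n−j}^{(k+j)}. Then for all n ≥ 0 and k ≥ 1, μ_n^{(k)} = H_n(n+k−1) − n·H_{n−1}(n+k−1). (The paper shows that μ_n^{(k)} is the Möbius coinvariant of the graph K_n^{(k)}, the complete graph K_n with an extra root vertex joined to each of the n vertices by k parallel edges.) -/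
/-! Write `S_n^{(k)}` for the sum in the recurrence, so that
`μ_{n+1}^{(k)} = (k−1)·μ_n^{(k+1)} + k·S_n^{(k)}`. Pulling the factor `n+1` out of
every product and splitting off the term `j = 2` gives
`S_{n+1}^{(k)} = (n+1)·(μ_n^{(k+2)} + S_n^{(k+1)})`. A simultaneous induction on `n`
then proves the formula for `μ` together with `S_n^{(k)} = n·H_{n−1}(n+k)`, each step
closing by the Hermite recurrence. -/

open Polynomial Finset

/-- The Hermite polynomial `H_n(x) ∈ ℤ[x]`, defined by `H_{-1} = 0`, `H_0 = 1` and
`H_{n+1}(x) = x·H_n(x) + n·H_{n-1}(x)` (so `H_1 = X`). -/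
noncomputable def hermiteH : ℕ → Polynomial ℤ
  | 0 => 1
  | 1 => X
  | (n + 2) => X * hermiteH (n + 1) + C ((n : ℤ) + 1) * hermiteH n

/-- The integers `μ_n^{(k)}`, defined by `μ_0^{(k)} = 1` and, for `n ≥ 1`,
`μ_n^{(k)} = (k−1)·μ_{n−1}^{(k+1)} + k·Σ_{j=2}^{n} ((n−1)(n−2)⋯(n−j+1))·μ_{n−j}^{(k+j)}`.
(They are the Möbius coinvariants of the rooted complete graphs `K_n^{(k)}`.) -/
noncomputable def muK : ℕ → ℕ → ℤ
  | 0, _ => 1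
  | (n + 1), k =>
      ((k : ℤ) - 1) * muK n (k + 1) +
        (k : ℤ) * ∑ j ∈ (Finset.Icc 2 (n + 1)).attach,
          (∏ s ∈ Finset.Icc 1 (j.1 - 1), (((n : ℤ) + 1) - (s : ℤ))) * muK (n + 1 - j.1) (k + j.1)
  termination_by n _ => n
  decreasing_by
  · omega
  · have hj := j.2
    simp only [Finset.mem_Icc] at hj
    omega

lemma hermiteH_succ_eval (n : ℕ) (x : ℤ) :
    (hermiteH (n + 1)).eval x = x * (hermiteH n).eval x + n * (hermiteH (n - 1)).eval x := by
  cases n <;> simp [hermiteH]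

lemma prod_Icc_one_sub_succ (m : ℤ) (i : ℕ) :
    ∏ s ∈ Icc 1 (i + 1), (m + 1 - s) = m * ∏ s ∈ Icc 1 i, (m - s) := by
  rw [Icc_eq_cons_Ioc (by omega), prod_cons, ← Icc_add_one_left_eq_Ioc,
    ← map_add_right_Icc 1 i 1, prod_map]
  simp [add_sub_add_right_eq_sub]

noncomputable def muKSum (n k : ℕ) : ℤ :=
  ∑ j ∈ Icc 2 (n + 1), (∏ s ∈ Icc 1 (j - 1), ((n : ℤ) + 1 - s)) * muK (n + 1 - j) (k + j)

lemma muK_zero (k : ℕ) : muK 0 k = 1 := by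
  rw [muK]

lemma muK_succ (n k : ℕ) :
    muK (n + 1) k = ((k : ℤ) - 1) * muK n (k + 1) + k * muKSum n k := by
  rw [muK, muKSum, sum_attach (Icc 2 (n + 1))
    (fun j ↦ (∏ s ∈ Icc 1 (j - 1), ((n : ℤ) + 1 - s)) * muK (n + 1 - j) (k + j))]

lemma muKSum_zero (k : ℕ) : muKSum 0 k = 0 := by
  simp [muKSum]

lemma muKSum_succ (n k : ℕ) :
    muKSum (n + 1) k = (n + 1) * (muK n (k + 2) + muKSum n (k + 1)) := by
  have h_term : ∀ i ∈ Icc 2 (n + 1),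
      (∏ s ∈ Icc 1 i, ((n : ℤ) + 1 + 1 - s)) * muK (n + 1 - i) (k + (i + 1)) =
        (n + 1) * ((∏ s ∈ Icc 1 (i - 1), ((n : ℤ) + 1 - s)) * muK (n + 1 - i) (k + 1 + i)) := by
    intro i hi
    obtain ⟨j, rfl⟩ : ∃ j, i = j + 1 := ⟨i - 1, by grind⟩
    rw [prod_Icc_one_sub_succ, Nat.add_sub_cancel,
      show k + (j + 1 + 1) = k + 1 + (j + 1) by ring]
    ring
  rw [muKSum, Icc_eq_cons_Ioc (by omega), sum_cons, ← Icc_add_one_left_eq_Ioc,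
    ← map_add_right_Icc 2 (n + 1) 1, sum_map]
  simp only [addRightEmbedding_apply]
  push_cast
  rw [sum_congr rfl h_term, ← mul_sum, muKSum, Icc_self, prod_singleton]
  push_cast
  ring

lemma muK_eq_and_muKSum_eq (n : ℕ) :
    (∀ k : ℕ, muK n k = (hermiteH n).eval ((n : ℤ) + k - 1) -
        n * (hermiteH (n - 1)).eval ((n : ℤ) + k - 1)) ∧
      ∀ k : ℕ, muKSum n k = n * (hermiteH (n - 1)).eval ((n : ℤ) + k) := by
  induction n with
  | zero => simp [muK_zero, muKSum_zero, hermiteH]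
  | succ n ih =>
    obtain ⟨ih_muK, ih_muKSum⟩ := ih
    refine ⟨fun k ↦ ?_, fun k ↦ ?_⟩
    · rw [muK_succ, ih_muK, ih_muKSum, Nat.add_sub_cancel, hermiteH_succ_eval]
      push_cast
      ring_nf
    · rw [muKSum_succ, ih_muK, ih_muKSum, Nat.add_sub_cancel]
      push_cast
      ring_nf

theorem muK_eq_hermiteH_general (n k : ℕ) :
    muK n k =
      (hermiteH n).eval ((n : ℤ) + (k : ℤ) - 1) -
        (n : ℤ) * (hermiteH (n - 1)).eval ((n : ℤ) + (k : ℤ) - 1) :=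
  (muK_eq_and_muKSum_eq n).1 k

/-- `μ_n^{(k)} = H_n(n+k−1) − n·H_{n−1}(n+k−1)` for all `n ≥ 0`, `k ≥ 1`. -/
theorem muK_eq_hermiteH (n k : ℕ) (hk : 1 ≤ k) :
    muK n k =
      (hermiteH n).eval ((n : ℤ) + (k : ℤ) - 1) -
        (n : ℤ) * (hermiteH (n - 1)).eval ((n : ℤ) + (k : ℤ) - 1) :=
  muK_eq_hermiteH_general n k
end

section
/- Define integers μ_{m,n}^{(k,l)} for all m, n ≥ 0 and k, l ≥ 1 by the initial conditions μ_{0,n}^{(k,l)} = (l−1)^n and μ_{m,0}^{(k,l)} = (k−1)^m, and for m, n ≥ 1 by μ_{m,n}^{(k,l)} = (k−1)·μ_{m−1,n}^{(k,l+1)} + Σ_{r=1}^{min(m,n)} l·n·(∏_{s=1}^{r−1}(m−s)(n−s))·μ_{m−r,n−r}^{(k+r,l+r)} + Σ_{r=1}^{min(m−1,n)} k·n·(∏_{s=1}^{r−1}(m−s)(n−s))·(m−r)·μ_{m−r−1,n−r}^{(k+r,l+r+1)}. Then for all m, n ≥ 0 and k, l ≥ 1, μ_{m,n}^{(k,l)}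 = H_{m,n}(n+k−1, m+l−1) − m·n·H_{m−1,n−1}(n+k−1, m+l−1). (The paper shows that μ_{m,n}^{(k,l)} is the Möbius coinvariant of the complete bipartite graph K_{m,n} augmented by a root vertex joined to each vertex of the first part by k parallel edges and to each vertex of the second part by l parallel edges.) -/
open Finset

/-- The bipartite Hermite polynomial
`H_{m,n}(x,y) = Σ_{k=0}^{min(m,n)} binom(m,k)·binom(n,k)·k!·x^{m−k}·y^{n−k}`. -/
def bhermiteH (m n : ℕ) (x y : ℤ) : ℤ :=
  ∑ k ∈ Finset.range (min m n + 1),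
    (m.choose k : ℤ) * (n.choose k : ℤ) * (k.factorial : ℤ) * x ^ (m - k) * y ^ (n - k)

lemma bh_zero_left (n : ℕ) (x y : ℤ) : bhermiteH 0 n x y = y ^ n := by
  simp [bhermiteH]

lemma bh_symm (m n : ℕ) (x y : ℤ) : bhermiteH m n x y = bhermiteH n m y x := by
  simp only [bhermiteH, Nat.min_comm n m]
  exact Finset.sum_congr rfl fun k _ => by ring

lemma bh_zero_right (m : ℕ) (x y : ℤ) : bhermiteH m 0 x y = x ^ m := by
  rw [bh_symm, bh_zero_left]

lemma bh_ext (m n N : ℕ) (h : min m n < N) (x y : ℤ) :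
    bhermiteH m n x y = ∑ j ∈ Finset.range N,
      (m.choose j : ℤ) * (n.choose j : ℤ) * (j.factorial : ℤ) * x ^ (m - j) * y ^ (n - j) := by
  apply Finset.sum_subset
  · intro j hj
    simp only [mem_range] at *
    omega
  · intro j _ hj'
    simp only [mem_range, not_lt] at hj'
    have : m < j ∨ n < j := by omega
    rcases this with h | h
    · simp [Nat.choose_eq_zero_of_lt h]
    · simp [Nat.choose_eq_zero_of_lt h]

lemma bh_rec1 (m n : ℕ) (x y : ℤ) :
    bhermiteH (m+1) (n+1) x y =
      x * bhermiteH m (n+1) x y + ((n:ℤ)+1) * bhermiteH m n x y := by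
  rw [bh_ext (m+1) (n+1) (min m n + 2) (by omega) x y,
      bh_ext m (n+1) (min m n + 2) (by omega) x y,
      bh_ext m n (min m n + 1) (by omega) x y,
      Finset.sum_range_succ' _ (min m n + 1),
      Finset.sum_range_succ' _ (min m n + 1)]
  have key : ∀ i ∈ Finset.range (min m n + 1),
      ((m+1).choose (i+1) : ℤ) * ((n+1).choose (i+1) : ℤ) * ((i+1).factorial : ℤ) *
        x ^ (m+1-(i+1)) * y ^ (n+1-(i+1))
      = x * ((m.choose (i+1) : ℤ) * ((n+1).choose (i+1) : ℤ) * ((i+1).factorial : ℤ) *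
          x ^ (m-(i+1)) * y ^ (n+1-(i+1)))
        + ((n:ℤ)+1) * ((m.choose i : ℤ) * (n.choose i : ℤ) * (i.factorial : ℤ) *
          x ^ (m-i) * y ^ (n-i)) := by
    intro i hi
    simp only [mem_range] at hi
    have hsub1 : m + 1 - (i+1) = m - i := by omega
    have hsub2 : n + 1 - (i+1) = n - i := by omega
    rw [hsub1, hsub2]
    have c1 : ((m+1).choose (i+1) : ℤ) = (m.choose i : ℤ) + (m.choose (i+1) : ℤ) := by
      exact_mod_cast congrArg (Nat.cast : ℕ → ℤ) (Nat.choose_succ_succ m i)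
    have c2 : ((n+1).choose (i+1) : ℤ) * ((i:ℤ)+1) = ((n:ℤ)+1) * (n.choose i : ℤ) := by
      have := Nat.add_one_mul_choose_eq n i
      push_cast at this ⊢
      linarith [this]
    have cf : ((i+1).factorial : ℤ) = ((i:ℤ)+1) * (i.factorial : ℤ) := by
      rw [Nat.factorial_succ]; push_cast; ring
    rcases Nat.lt_or_ge i m with him | him
    · have hx : x ^ (m - i) = x * x ^ (m - (i+1)) := by
        rw [← pow_succ']
        congr 1
        omega
      rw [hx, c1, cf]
      linear_combination (x * x ^ (m - (i+1)) * y ^ (n - i) * (m.choose i : ℤ) * (i.factorial : ℤ)) * c2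
    · have h0 : m.choose (i+1) = 0 := Nat.choose_eq_zero_of_lt (by omega)
      have hmm : m - i = 0 := by omega
      have hmm2 : m - (i+1) = 0 := by omega
      rw [c1, cf, h0, hmm, hmm2]
      push_cast
      linear_combination (y ^ (n - i) * (m.choose i : ℤ) * (i.factorial : ℤ)) * c2
  rw [Finset.sum_congr rfl key, Finset.sum_add_distrib, ← Finset.mul_sum, ← Finset.mul_sum]
  simp only [Nat.choose_zero_right, Nat.factorial_zero, Nat.sub_zero, Nat.cast_one]
  have hp : x ^ (m+1) = x * x ^ m := by rw [pow_succ]; ring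
  rw [hp]
  ring

lemma bh_rec2 (m n : ℕ) (x y : ℤ) :
    bhermiteH m (n+1) x y = y * bhermiteH m n x y + (m:ℤ) * bhermiteH (m-1) n x y := by
  cases m with
  | zero =>
    simp only [bh_zero_left, Nat.cast_zero, zero_mul, add_zero, pow_succ]
    ring
  | succ m =>
    rw [bh_symm (m+1) (n+1), bh_rec1 n m y x, bh_symm n (m+1) y x, bh_symm n m y x]
    simp only [Nat.add_sub_cancel]
    push_cast
    ring

lemma sum_Icc_one (K : ℕ) (f : ℕ → ℤ) : ∑ r ∈ Icc 1 K, f r = ∑ i ∈ range K, f (1+i) := by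
  rw [← Finset.Ico_add_one_right_eq_Icc, Finset.sum_Ico_eq_sum_range]
  norm_num

lemma tele1 (M N : ℕ) (x y : ℤ) :
    ∑ r ∈ Icc 1 (min (M+1) (N+1)),
      (∏ s ∈ Icc 1 (r-1), (((M:ℤ)+1-(s:ℤ)) * ((N:ℤ)+1-(s:ℤ)))) *
        (bhermiteH (M+1-r) (N+1-r) x y -
          ((M+1-r : ℕ):ℤ) * ((N+1-r : ℕ):ℤ) * bhermiteH (M+1-r-1) (N+1-r-1) x y)
    = bhermiteH M N x y := by
  set K := min (M+1) (N+1) with hK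
  set f : ℕ → ℤ := fun i =>
    (∏ s ∈ Icc 1 i, (((M:ℤ)+1-(s:ℤ)) * ((N:ℤ)+1-(s:ℤ)))) * bhermiteH (M-i) (N-i) x y with hf
  rw [sum_Icc_one]
  have key : ∀ i ∈ range K,
      (∏ s ∈ Icc 1 (1+i-1), (((M:ℤ)+1-(s:ℤ)) * ((N:ℤ)+1-(s:ℤ)))) *
        (bhermiteH (M+1-(1+i)) (N+1-(1+i)) x y -
          ((M+1-(1+i) : ℕ):ℤ) * ((N+1-(1+i) : ℕ):ℤ) *
            bhermiteH (M+1-(1+i)-1) (N+1-(1+i)-1) x y)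
      = f i - f (i+1) := by
    intro i hi
    simp only [mem_range] at hi
    have hiM : i ≤ M := by omega
    have hiN : i ≤ N := by omega
    have e1 : 1 + i - 1 = i := by omega
    have e2 : M + 1 - (1+i) = M - i := by omega
    have e3 : N + 1 - (1+i) = N - i := by omega
    have e4 : M - i - 1 = M - (i+1) := by omega
    have e5 : N - i - 1 = N - (i+1) := by omega
    have c1 : ((M - i : ℕ) : ℤ) = (M:ℤ) - i := by omega
    have c2 : ((N - i : ℕ) : ℤ) = (N:ℤ) - i := by omega
    rw [e1, e2, e3, e4, e5, c1, c2, hf]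
    simp only
    rw [Finset.prod_Icc_succ_top (by omega : 1 ≤ i + 1)]
    push_cast
    ring
  rw [Finset.sum_congr rfl key, Finset.sum_range_sub' f K]
  have hf0 : f 0 = bhermiteH M N x y := by
    simp [hf]
  have hfK : f K = 0 := by
    have hK1 : 1 ≤ K := by omega
    have hprod : (∏ s ∈ Icc 1 K, (((M:ℤ)+1-(s:ℤ)) * ((N:ℤ)+1-(s:ℤ)))) = 0 := by
      apply Finset.prod_eq_zero (Finset.mem_Icc.mpr ⟨hK1, le_refl K⟩)
      have : K = M + 1 ∨ K = N + 1 := by omega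
      rcases this with h | h <;> rw [h] <;> push_cast <;> ring
    rw [hf]
    simp only [hprod, zero_mul]
  rw [hf0, hfK, sub_zero]

lemma tele2 (M N : ℕ) (x y : ℤ) :
    ∑ r ∈ Icc 1 (min M (N+1)),
      (∏ s ∈ Icc 1 (r-1), (((M:ℤ)+1-(s:ℤ)) * ((N:ℤ)+1-(s:ℤ)))) * (((M:ℤ)+1) - (r:ℤ)) *
        (bhermiteH (M+1-r-1) (N+1-r) x y -
          ((M+1-r-1 : ℕ):ℤ) * ((N+1-r : ℕ):ℤ) * bhermiteH (M+1-r-1-1) (N+1-r-1) x y)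
    = (M:ℤ) * bhermiteH (M-1) N x y := by
  set K := min M (N+1) with hK
  set f : ℕ → ℤ := fun i =>
    (∏ s ∈ Icc 1 i, (((M:ℤ)+1-(s:ℤ)) * ((N:ℤ)+1-(s:ℤ)))) * ((M:ℤ) - i) *
      bhermiteH (M-1-i) (N-i) x y with hf
  rw [sum_Icc_one]
  have key : ∀ i ∈ range K,
      (∏ s ∈ Icc 1 (1+i-1), (((M:ℤ)+1-(s:ℤ)) * ((N:ℤ)+1-(s:ℤ)))) * (((M:ℤ)+1) - ((1+i : ℕ):ℤ)) *
        (bhermiteH (M+1-(1+i)-1) (N+1-(1+i)) x y -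
          ((M+1-(1+i)-1 : ℕ):ℤ) * ((N+1-(1+i) : ℕ):ℤ) *
            bhermiteH (M+1-(1+i)-1-1) (N+1-(1+i)-1) x y)
      = f i - f (i+1) := by
    intro i hi
    simp only [mem_range] at hi
    have hiM : i + 1 ≤ M := by omega
    have hiN : i ≤ N := by omega
    have e1 : 1 + i - 1 = i := by omega
    have e2 : M + 1 - (1+i) - 1 = M - 1 - i := by omega
    have e3 : N + 1 - (1+i) = N - i := by omega
    have e4 : M - 1 - i - 1 = M - 1 - (i+1) := by omega
    have e5 : N - i - 1 = N - (i+1) := by omega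
    have c1 : ((M - 1 - i : ℕ) : ℤ) = (M:ℤ) - 1 - i := by omega
    have c2 : ((N - i : ℕ) : ℤ) = (N:ℤ) - i := by omega
    have c3 : ((1 + i : ℕ) : ℤ) = 1 + (i:ℤ) := by omega
    rw [e1, e2, e3, e4, e5, c1, c2, c3, hf]
    simp only
    rw [Finset.prod_Icc_succ_top (by omega : 1 ≤ i + 1)]
    push_cast
    ring
  rw [Finset.sum_congr rfl key, Finset.sum_range_sub' f K]
  have hf0 : f 0 = (M:ℤ) * bhermiteH (M-1) N x y := by
    simp [hf]
  have hfK : f K = 0 := by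
    rcases (by omega : K = M ∨ (1 ≤ K ∧ K = N + 1)) with h | ⟨h1, h⟩
    · rw [hf]
      simp only
      rw [h]
      simp
    · have hprod : (∏ s ∈ Icc 1 K, (((M:ℤ)+1-(s:ℤ)) * ((N:ℤ)+1-(s:ℤ)))) = 0 := by
        apply Finset.prod_eq_zero (Finset.mem_Icc.mpr ⟨h1, le_refl K⟩)
        rw [h]; push_cast; ring
      rw [hf]
      simp only [hprod, zero_mul]
  rw [hf0, hfK, sub_zero]

/-- The integers `μ_{m,n}^{(k,l)}`, defined by `μ_{0,n}^{(k,l)} = (l−1)^n`,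
`μ_{m,0}^{(k,l)} = (k−1)^m`, and for `m, n ≥ 1` by
`μ_{m,n}^{(k,l)} = (k−1)·μ_{m−1,n}^{(k,l+1)}
  + Σ_{r=1}^{min(m,n)} l·n·((m−1)(n−1)⋯(m−r+1)(n−r+1))·μ_{m−r,n−r}^{(k+r,l+r)}
  + Σ_{r=1}^{min(m−1,n)} k·n·((m−1)(n−1)⋯(m−r+1)(n−r+1))·(m−r)·μ_{m−r−1,n−r}^{(k+r,l+r+1)}`.
(They are the Möbius coinvariants of the rooted complete bipartite graphs.) -/
noncomputable def muKB : ℕ → ℕ → ℕ → ℕ → ℤ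
  | 0, n, _, l => ((l : ℤ) - 1) ^ n
  | (m + 1), 0, k, _ => ((k : ℤ) - 1) ^ (m + 1)
  | (m + 1), (n + 1), k, l =>
      ((k : ℤ) - 1) * muKB m (n + 1) k (l + 1) +
        (∑ r ∈ (Finset.Icc 1 (min (m + 1) (n + 1))).attach,
          (l : ℤ) * ((n : ℤ) + 1) *
            (∏ s ∈ Finset.Icc 1 (r.1 - 1), ((((m : ℤ) + 1) - s) * (((n : ℤ) + 1) - s))) *
            muKB (m + 1 - r.1) (n + 1 - r.1) (k + r.1) (l + r.1)) +
        ∑ r ∈ (Finset.Icc 1 (min m (n + 1))).attach,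
          (k : ℤ) * ((n : ℤ) + 1) *
            (∏ s ∈ Finset.Icc 1 (r.1 - 1), ((((m : ℤ) + 1) - s) * (((n : ℤ) + 1) - s))) *
            (((m : ℤ) + 1) - (r.1 : ℤ)) *
            muKB (m + 1 - r.1 - 1) (n + 1 - r.1) (k + r.1) (l + r.1 + 1)
  termination_by m _ _ _ => m
  decreasing_by
  · omega
  · have hr := r.2
    simp only [Finset.mem_Icc] at hr
    omega
  · have hr := r.2
    simp only [Finset.mem_Icc] at hr
    omega

/-- `μ_{m,n}^{(k,l)} = H_{m,n}(n+k−1, m+l−1) − m·n·H_{m−1,n−1}(n+k−1, m+l−1)`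
for all `m, n ≥ 0` and `k, l ≥ 1`. -/
theorem muKB_eq_bhermiteH (m n k l : ℕ) (hk : 1 ≤ k) (hl : 1 ≤ l) :
    muKB m n k l =
      bhermiteH m n ((n : ℤ) + (k : ℤ) - 1) ((m : ℤ) + (l : ℤ) - 1) -
        (m : ℤ) * (n : ℤ) *
          bhermiteH (m - 1) (n - 1) ((n : ℤ) + (k : ℤ) - 1) ((m : ℤ) + (l : ℤ) - 1) := by
  induction m using Nat.strong_induction_on generalizing n k l with
  | _ m ih =>
  cases m with
  | zero =>
    rw [muKB]
    simp [bh_zero_left]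
  | succ M =>
    cases n with
    | zero =>
      rw [muKB]
      simp [bh_zero_right]
    | succ N =>
      rw [muKB]
      have A1 : ∑ r ∈ (Finset.Icc 1 (min (M+1) (N+1))).attach,
          ((l:ℤ) * ((N:ℤ)+1) * ∏ s ∈ Finset.Icc 1 ((r:ℕ) - 1),
              (((M:ℤ)+1) - (s:ℤ)) * (((N:ℤ)+1) - (s:ℤ))) *
            muKB (M + 1 - (r:ℕ)) (N + 1 - (r:ℕ)) (k + (r:ℕ)) (l + (r:ℕ))
          = ∑ r ∈ Finset.Icc 1 (min (M+1) (N+1)),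
          ((l:ℤ) * ((N:ℤ)+1) * ∏ s ∈ Finset.Icc 1 (r - 1),
              (((M:ℤ)+1) - (s:ℤ)) * (((N:ℤ)+1) - (s:ℤ))) *
            muKB (M + 1 - r) (N + 1 - r) (k + r) (l + r) :=
        Finset.sum_attach (Finset.Icc 1 (min (M+1) (N+1))) (fun r =>
          ((l:ℤ) * ((N:ℤ)+1) * ∏ s ∈ Finset.Icc 1 (r - 1),
              (((M:ℤ)+1) - (s:ℤ)) * (((N:ℤ)+1) - (s:ℤ))) *
            muKB (M + 1 - r) (N + 1 - r) (k + r) (l + r))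
      have A2 : ∑ r ∈ (Finset.Icc 1 (min M (N+1))).attach,
          ((k:ℤ) * ((N:ℤ)+1) * ∏ s ∈ Finset.Icc 1 ((r:ℕ) - 1),
              (((M:ℤ)+1) - (s:ℤ)) * (((N:ℤ)+1) - (s:ℤ))) *
            (((M:ℤ)+1) - ((r:ℕ):ℤ)) *
            muKB (M + 1 - (r:ℕ) - 1) (N + 1 - (r:ℕ)) (k + (r:ℕ)) (l + (r:ℕ) + 1)
          = ∑ r ∈ Finset.Icc 1 (min M (N+1)),
          ((k:ℤ) * ((N:ℤ)+1) * ∏ s ∈ Finset.Icc 1 (r - 1),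
              (((M:ℤ)+1) - (s:ℤ)) * (((N:ℤ)+1) - (s:ℤ))) *
            (((M:ℤ)+1) - (r:ℤ)) *
            muKB (M + 1 - r - 1) (N + 1 - r) (k + r) (l + r + 1) :=
        Finset.sum_attach (Finset.Icc 1 (min M (N+1))) (fun r =>
          ((k:ℤ) * ((N:ℤ)+1) * ∏ s ∈ Finset.Icc 1 (r - 1),
              (((M:ℤ)+1) - (s:ℤ)) * (((N:ℤ)+1) - (s:ℤ))) *
            (((M:ℤ)+1) - (r:ℤ)) *
            muKB (M + 1 - r - 1) (N + 1 - r) (k + r) (l + r + 1))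
      rw [A1, A2]
      have hmu1 : muKB M (N+1) k (l+1)
          = bhermiteH M (N+1) (((N+1:ℕ):ℤ) + (k:ℤ) - 1) (((M+1:ℕ):ℤ) + (l:ℤ) - 1)
            - (M:ℤ)*((N+1:ℕ):ℤ)*bhermiteH (M-1) N
                (((N+1:ℕ):ℤ) + (k:ℤ) - 1) (((M+1:ℕ):ℤ) + (l:ℤ) - 1) := by
        rw [ih M (by omega) (N+1) k (l+1) hk (by omega)]
        have e1 : (M:ℤ) + ((l+1:ℕ):ℤ) - 1 = ((M+1:ℕ):ℤ) + (l:ℤ) - 1 := by push_cast; ring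
        rw [e1]
        simp only [Nat.add_sub_cancel]
      have hT1 : ∑ r ∈ Finset.Icc 1 (min (M+1) (N+1)),
          ((l:ℤ) * ((N:ℤ)+1) * ∏ s ∈ Finset.Icc 1 (r - 1),
              (((M:ℤ)+1) - (s:ℤ)) * (((N:ℤ)+1) - (s:ℤ))) *
            muKB (M + 1 - r) (N + 1 - r) (k + r) (l + r)
          = (l:ℤ) * ((N:ℤ)+1) *
              bhermiteH M N (((N+1:ℕ):ℤ) + (k:ℤ) - 1) (((M+1:ℕ):ℤ) + (l:ℤ) - 1) := by
        have congr1 : ∀ r ∈ Finset.Icc 1 (min (M+1) (N+1)),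
            ((l:ℤ) * ((N:ℤ)+1) * ∏ s ∈ Finset.Icc 1 (r - 1),
                (((M:ℤ)+1) - (s:ℤ)) * (((N:ℤ)+1) - (s:ℤ))) *
              muKB (M + 1 - r) (N + 1 - r) (k + r) (l + r)
            = (l:ℤ) * ((N:ℤ)+1) *
              ((∏ s ∈ Finset.Icc 1 (r-1), (((M:ℤ)+1-(s:ℤ)) * ((N:ℤ)+1-(s:ℤ)))) *
                (bhermiteH (M+1-r) (N+1-r)
                    (((N+1:ℕ):ℤ) + (k:ℤ) - 1) (((M+1:ℕ):ℤ) + (l:ℤ) - 1) -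
                  ((M+1-r : ℕ):ℤ) * ((N+1-r : ℕ):ℤ) *
                    bhermiteH (M+1-r-1) (N+1-r-1)
                      (((N+1:ℕ):ℤ) + (k:ℤ) - 1) (((M+1:ℕ):ℤ) + (l:ℤ) - 1))) := by
          intro r hr
          simp only [mem_Icc] at hr
          rw [ih (M+1-r) (by omega) (N+1-r) (k+r) (l+r) (by omega) (by omega)]
          have e1 : ((N+1-r : ℕ):ℤ) + ((k+r:ℕ):ℤ) - 1 = ((N+1:ℕ):ℤ) + (k:ℤ) - 1 := by omega
          have e2 : ((M+1-r : ℕ):ℤ) + ((l+r:ℕ):ℤ) - 1 = ((M+1:ℕ):ℤ) + (l:ℤ) - 1 := by omega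
          rw [e1, e2]
          ring
        rw [Finset.sum_congr rfl congr1, ← Finset.mul_sum, tele1 M N]
      have hT2 : ∑ r ∈ Finset.Icc 1 (min M (N+1)),
          ((k:ℤ) * ((N:ℤ)+1) * ∏ s ∈ Finset.Icc 1 (r - 1),
              (((M:ℤ)+1) - (s:ℤ)) * (((N:ℤ)+1) - (s:ℤ))) *
            (((M:ℤ)+1) - (r:ℤ)) *
            muKB (M + 1 - r - 1) (N + 1 - r) (k + r) (l + r + 1)
          = (k:ℤ) * ((N:ℤ)+1) * ((M:ℤ) *
              bhermiteH (M-1) N (((N+1:ℕ):ℤ) + (k:ℤ) - 1) (((M+1:ℕ):ℤ) + (l:ℤ) - 1)) := by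
        have congr2 : ∀ r ∈ Finset.Icc 1 (min M (N+1)),
            ((k:ℤ) * ((N:ℤ)+1) * ∏ s ∈ Finset.Icc 1 (r - 1),
                (((M:ℤ)+1) - (s:ℤ)) * (((N:ℤ)+1) - (s:ℤ))) *
              (((M:ℤ)+1) - (r:ℤ)) *
              muKB (M + 1 - r - 1) (N + 1 - r) (k + r) (l + r + 1)
            = (k:ℤ) * ((N:ℤ)+1) *
              ((∏ s ∈ Finset.Icc 1 (r-1), (((M:ℤ)+1-(s:ℤ)) * ((N:ℤ)+1-(s:ℤ)))) *
                (((M:ℤ)+1) - (r:ℤ)) *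
                (bhermiteH (M+1-r-1) (N+1-r)
                    (((N+1:ℕ):ℤ) + (k:ℤ) - 1) (((M+1:ℕ):ℤ) + (l:ℤ) - 1) -
                  ((M+1-r-1 : ℕ):ℤ) * ((N+1-r : ℕ):ℤ) *
                    bhermiteH (M+1-r-1-1) (N+1-r-1)
                      (((N+1:ℕ):ℤ) + (k:ℤ) - 1) (((M+1:ℕ):ℤ) + (l:ℤ) - 1))) := by
          intro r hr
          simp only [mem_Icc] at hr
          rw [ih (M+1-r-1) (by omega) (N+1-r) (k+r) (l+r+1) (by omega) (by omega)]
          have e1 : ((N+1-r : ℕ):ℤ) + ((k+r:ℕ):ℤ) - 1 = ((N+1:ℕ):ℤ) + (k:ℤ) - 1 := by omega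
          have e2 : ((M+1-r-1 : ℕ):ℤ) + ((l+r+1:ℕ):ℤ) - 1 = ((M+1:ℕ):ℤ) + (l:ℤ) - 1 := by
            omega
          rw [e1, e2]
          ring
        rw [Finset.sum_congr rfl congr2, ← Finset.mul_sum, tele2 M N]
      rw [hmu1, hT1, hT2]
      simp only [Nat.add_sub_cancel]
      rw [bh_rec1 M N, bh_rec2 M N]
      push_cast
      ring
end

section
/- Let k be a field and P a finite graded poset of rank r with least element 0̂ and greatest element 1̂. If the reduced homology H̃_i(Δ(P_(i+3))) vanishes for all i with 0 ≤ i ≤ r−3, then the complex Z(P) is exact. -/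
open Finset

attribute [local instance] Classical.propDecidable

noncomputable section

variable (k : Type*) [Field k]
variable {P : Type*} [PartialOrder P] [BoundedOrder P] [Fintype P]

/-- Strictly decreasing chains `[F_0, F_1, …, F_{m-1}]` (so of `m` elements) with all entries
strictly between `0̂` and `F`: these are the `(m-1)`-dimensional faces of the order complex
`Δ(F)` of the lower interval `[0̂, F]`; for `m = 0` this is the empty chain. -/
def DChain (P : Type*) [PartialOrder P] [BoundedOrder P] (m : ℕ) (F : P) : Type _ :=
  {f : Fin m → P // StrictAnti f ∧ ∀ t, ⊥ < f t ∧ f t < F}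

/-- The space `C_{m-1}(Δ(F))` of `(m-1)`-dimensional chains of `Δ(F)`
(so `CC k 0 F = C_{-1}(Δ(F)) ≅ k`, spanned by the empty chain). -/
abbrev CC (m : ℕ) (F : P) : Type _ := DChain P m F →₀ k

/-- Deletion of the `j`-th entry of a chain. -/
def delChain {m : ℕ} {F : P} (c : DChain P (m + 1) F) (j : Fin (m + 1)) : DChain P m F :=
  ⟨c.1 ∘ j.succAbove, c.2.1.comp_strictMono (Fin.strictMono_succAbove j),
    fun t => c.2.2 (j.succAbove t)⟩

/-- The simplicial boundary map `∂ : C_m(Δ(F)) → C_{m-1}(Δ(F))`,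
`[F_0,…,F_m] ↦ Σ_j (−1)^j [F_0,…,F̂_j,…,F_m]` (for `m = 0` this is the augmentation
`[F_0] ↦ ∅`). -/
def bdry (m : ℕ) (F : P) : CC k (m + 1) F →ₗ[k] CC k m F :=
  Finsupp.lsum k fun c => LinearMap.toSpanSingleton k _
    (∑ j : Fin (m + 1), ((-1 : k) ^ (j : ℕ)) • Finsupp.single (delChain c j) (1 : k))

/-- The cycle space: `cycles k m F` is `Z_{m-1}(Δ(F))`; in particular
`cycles k 0 F = Z_{-1}(Δ(F)) = C_{-1}(Δ(F)) ≅ k`. -/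
def cycles : (m : ℕ) → (F : P) → Submodule k (CC k m F)
  | 0, _ => ⊤
  | (m + 1), F => LinearMap.ker (bdry k m F)

/-- The map `φ : C_m(Δ(F)) → C_{m-1}(Δ(F'))` sending `[F_0,…,F_m]` to `[F_1,…,F_m]` if
`F_0 = F'` and to `0` otherwise. -/
def phiMap (m : ℕ) (F F' : P) : CC k (m + 1) F →ₗ[k] CC k m F' :=
  Finsupp.lsum k fun c => LinearMap.toSpanSingleton k _
    (if h : c.1 0 = F' then
      Finsupp.single
        (⟨fun t => c.1 t.succ, c.2.1.comp_strictMono (Fin.strictMono_succ),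
          fun t => ⟨(c.2.2 t.succ).1,
            lt_of_lt_of_eq (c.2.1 (Fin.succ_pos t)) h⟩⟩ : DChain P m F') (1 : k)
    else 0)

/-- The canonical identification `C_{-1}(Δ(F)) = k = C_{-1}(Δ(F'))` (empty chain to empty
chain); it is used for the final map of the complex `Z(P)`. -/
def relabel (F F' : P) : CC k 0 F →ₗ[k] CC k 0 F' :=
  Finsupp.lsum k fun _ => LinearMap.toSpanSingleton k _
    (Finsupp.single (⟨Fin.elim0, fun a => a.elim0, fun t => t.elim0⟩ : DChain P 0 F') (1 : k))

variable (rk : P → ℕ)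

/-- The `j`-th module of the complex `Z(P)` (before restricting to cycles):
`⊕_{rk F = j} C_{j-2}(Δ(F))`; for `j = 0` this is `⊕_{rk F = 0} C_{-1}(Δ(F)) ≅ k` (there is
only `F = 0̂` of rank `0`), the final `k` of the complex. -/
abbrev levelMod (j : ℕ) : Type _ := Π F : {F : P // rk F = j}, CC k (j - 1) F.1

/-- One component of the differential of `Z(P)`. -/
def step : (j : ℕ) → (F : P) → (F' : P) → (CC k j F →ₗ[k] CC k (j - 1) F')
  | 0, F, F' => relabel k F F'
  | (m + 1), F, F' => phiMap k m F F'

/-- The differential of the complex `Z(P)`, from level `j+1` to level `j` (for `j = 0` it is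
the sum of the canonical identifications `Z_{-1}(Δ(F)) = k`). -/
def dmap (j : ℕ) : levelMod k rk (j + 1) →ₗ[k] levelMod k rk j :=
  LinearMap.pi fun F' =>
    ∑ F : {F : P // rk F = j + 1}, (step k j F.1 F'.1).comp (LinearMap.proj F)

/-- The `j`-th term of the complex `Z(P)`: `⊕_{rk F = j} Z_{j-2}(Δ(F))` (for `j = 0`,
all of `k`). -/
def cyclesSub (j : ℕ) : Submodule k (levelMod k rk j) :=
  Submodule.pi Set.univ fun F => cycles k (j - 1) F.1

/-- Chains of the truncated order complex `Δ(P_(j))`: strictly decreasing chains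
`1̂ > F_0 > ⋯ > F_{m-1} > 0̂` in which every entry has rank `< j`. -/
def DChainR (P : Type*) [PartialOrder P] [BoundedOrder P] (rk : P → ℕ) (m j : ℕ) : Type _ :=
  {f : Fin m → P // StrictAnti f ∧ ∀ t, ⊥ < f t ∧ f t < ⊤ ∧ rk (f t) < j}

/-- The space of `(m-1)`-dimensional chains of `Δ(P_(j))`. -/
abbrev CCR (m j : ℕ) : Type _ := DChainR P rk m j →₀ k

/-- Deletion of the `t`-th entry of a chain of `Δ(P_(j))`. -/
def delChainR {m j : ℕ} (c : DChainR P rk (m + 1) j) (t : Fin (m + 1)) : DChainR P rk m j :=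
  ⟨c.1 ∘ t.succAbove, c.2.1.comp_strictMono (Fin.strictMono_succAbove t),
    fun u => c.2.2 (t.succAbove u)⟩

/-- The (augmented) boundary map of `Δ(P_(j))`. -/
def bdryR (m j : ℕ) : CCR k rk (m + 1) j →ₗ[k] CCR k rk m j :=
  Finsupp.lsum k fun c => LinearMap.toSpanSingleton k _
    (∑ t : Fin (m + 1), ((-1 : k) ^ (t : ℕ)) • Finsupp.single (delChainR rk c t) (1 : k))

/-!
Let `x` be a cycle of `Z(P)` in level `j + 1`, so `x_F ∈ Z_{j-1}(Δ(F))` for `rk F = j + 1`, and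
let `z = ∑_F F * x_F` be the chain of `Δ(P_(j+3))` obtained by prepending `F` to `x_F`. Then
`∂z = ∑_F x_F - ∑_F F * ∂x_F = ∑_{F'} F' * (dx)_{F'} = 0`, because a chain of `Δ(F)` with `j`
elements is saturated and so has head of rank `j` (in level `1`, `∑_F x_F` is `(dx)_{0̂}`
times the empty chain). If `j + 2 < r`, the vanishing of `H̃_j(Δ(P_(j+3)))` gives `∂y = z`;
the chains of `y` are saturated too, so `y = ∑_G G * y_G` with `rk G = j + 2`, and comparing
heads in `∂y = z` shows that `(y_G)_G` is a cycle of `Z(P)` mapped to `x`. If `j + 2 = r`, the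
chain `z` itself, viewed in `Δ(1̂)`, is the preimage. In the top level `j + 1 = r`, the same
expansion of `x_{1̂}` by heads gives `x_{1̂} = ∑_{F'} F' * (dx)_{F'} = 0`.
-/

set_option linter.unusedSectionVars false

theorem Fin.strictAnti_cons {α : Type*} [Preorder α] {n : ℕ} {f : Fin n → α} {a : α} :
    StrictAnti (Fin.cons a f : Fin (n + 1) → α) ↔ (∀ j, f j < a) ∧ StrictAnti f :=
  Fin.strictMono_cons (α := αᵒᵈ)

theorem StrictAnti.apply_last_add_le_apply_zero {m : ℕ} {g : Fin (m + 1) → ℕ}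
    (hg : StrictAnti g) : g (Fin.last m) + m ≤ g 0 := by
  have hanti : Antitone fun t : Fin (m + 1) => g t + t :=
    Fin.antitone_iff_succ_le.2 fun i => by
      have := hg (Fin.castSucc_lt_succ (i := i))
      simp only [Fin.val_succ, Fin.val_castSucc]
      omega
  simpa using hanti (Fin.zero_le (Fin.last m))

theorem lhom_ext_single_one {R M α : Type*} [Semiring R] [AddCommMonoid M] [Module R M]
    {φ ψ : (α →₀ R) →ₗ[R] M} (h : ∀ a, φ (Finsupp.single a 1) = ψ (Finsupp.single a 1)) :
    φ = ψ :=
  Finsupp.lhom_ext' fun a => LinearMap.ext_ring (h a)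

-- The predicates defining `DChain P m F` and `DChainR P rk m N`.
abbrev IsFace {m : ℕ} (F : P) (f : Fin m → P) : Prop :=
  StrictAnti f ∧ ∀ t, ⊥ < f t ∧ f t < F

abbrev IsFaceR (N : ℕ) {m : ℕ} (f : Fin m → P) : Prop :=
  StrictAnti f ∧ ∀ t, ⊥ < f t ∧ f t < ⊤ ∧ rk (f t) < N

/- Basis vectors, extended by `0` to tuples that are not faces: this lets the maps below be
written without side conditions. -/
def chainVec {m : ℕ} (F : P) (f : Fin m → P) : CC k m F :=
  if h : IsFace F f then Finsupp.single ⟨f, h⟩ 1 else 0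

def chainVecR (N : ℕ) {m : ℕ} (f : Fin m → P) : CCR k rk m N :=
  if h : IsFaceR rk N f then Finsupp.single ⟨f, h⟩ 1 else 0

def prependR (N : ℕ) {m : ℕ} (F : P) : CC k m F →ₗ[k] CCR k rk (m + 1) N :=
  Finsupp.linearCombination k fun c => chainVecR k rk N (Fin.cons F c.1)

def embedR (N : ℕ) {m : ℕ} (F : P) : CC k m F →ₗ[k] CCR k rk m N :=
  Finsupp.linearCombination k fun c => chainVecR k rk N c.1

-- The analogue of `phiMap` for `Δ(P_(N))`.
def extractR (N : ℕ) {m : ℕ} (F : P) : CCR k rk (m + 1) N →ₗ[k] CC k m F :=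
  Finsupp.linearCombination k fun d => if d.1 0 = F then chainVec k F (Fin.tail d.1) else 0

def ofTruncated (N : ℕ) {m : ℕ} (G : P) : CCR k rk m N →ₗ[k] CC k m G :=
  Finsupp.linearCombination k fun d => chainVec k G d.1

def sumPrependR (j : ℕ) (x : levelMod k rk (j + 1)) : CCR k rk (j + 1) (j + 3) :=
  ∑ F : {F : P // rk F = j + 1}, prependR k rk (j + 3) F.1 (x F)

section

variable {k rk}
variable {m N j r : ℕ}

theorem bot_lt_of_rk_pos (hbot : rk ⊥ = 0) {F : P} (hF : 0 < rk F) : ⊥ < F :=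
  bot_lt_iff_ne_bot.2 fun h => by simp [h, hbot] at hF

theorem lt_top_of_rk_lt (htop : rk ⊤ = r) {F : P} (hF : rk F < r) : F < ⊤ :=
  lt_top_iff_ne_top.2 fun h => by simp [h, htop] at hF

theorem eq_top_of_rk_eq (hrk : StrictMono rk) (htop : rk ⊤ = r) {F : P} (hF : rk F = r) :
    F = ⊤ :=
  by_contra fun h => (hrk (lt_top_iff_ne_top.2 h)).ne (hF.trans htop.symm)

theorem strictMono_of_rk_covBy (hcov : ∀ a b : P, a ⋖ b → rk b = rk a + 1) : StrictMono rk :=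
  letI := Fintype.toLocallyFiniteOrder (α := P)
  (strictMono_iff_forall_covBy rk).2 fun a b h => by rw [hcov a b h]; omega

theorem rk_apply_zero_eq (hrk : StrictMono rk) (hbot : rk ⊥ = 0) {f : Fin (m + 1) → P}
    (hf : StrictAnti f) (hpos : ⊥ < f (Fin.last m)) (hle : rk (f 0) ≤ m + 1) :
    rk (f 0) = m + 1 := by
  have := (hrk.comp_strictAnti hf).apply_last_add_le_apply_zero
  have := hrk hpos
  simp only [Function.comp_apply] at *
  omega

theorem chainVec_val {F : P} (c : DChain P m F) : chainVec k F c.1 = Finsupp.single c 1 :=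
  dif_pos c.2

theorem chainVecR_val (d : DChainR P rk m N) : chainVecR k rk N d.1 = Finsupp.single d 1 :=
  dif_pos d.2

theorem isFaceR_of_rk_le (hrk : StrictMono rk) {G : P} (hG : rk G ≤ N) (c : DChain P m G) :
    IsFaceR rk N c.1 :=
  ⟨c.2.1, fun t => ⟨(c.2.2 t).1, (c.2.2 t).2.trans_le le_top, (hrk (c.2.2 t).2).trans_le hG⟩⟩

theorem isFaceR_cons (hrk : StrictMono rk) {F : P} (hb : ⊥ < F) (ht : F < ⊤) (hN : rk F < N)
    (c : DChain P m F) : IsFaceR rk N (Fin.cons F c.1 : Fin (m + 1) → P) := by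
  refine ⟨Fin.strictAnti_cons.2 ⟨fun t => (c.2.2 t).2, c.2.1⟩, Fin.cases ?_ fun t => ?_⟩
  · simpa using ⟨hb, ht, hN⟩
  · simpa using ⟨(c.2.2 t).1, (c.2.2 t).2.trans ht, (hrk (c.2.2 t).2).trans hN⟩

theorem isFace_top (d : DChainR P rk m N) : IsFace (⊤ : P) d.1 :=
  ⟨d.2.1, fun t => ⟨(d.2.2 t).1, (d.2.2 t).2.1⟩⟩

theorem bdry_single {F : P} (c : DChain P (m + 1) F) :
    bdry k m F (Finsupp.single c 1) =
      ∑ j : Fin (m + 1), (-1 : k) ^ (j : ℕ) • chainVec k F (c.1 ∘ j.succAbove) := by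
  simp only [bdry, Finsupp.lsum_single, LinearMap.toSpanSingleton_apply, one_smul]
  exact Finset.sum_congr rfl fun j _ => congrArg _ (chainVec_val (delChain c j)).symm

theorem bdryR_single (d : DChainR P rk (m + 1) N) :
    bdryR k rk m N (Finsupp.single d 1) =
      ∑ t : Fin (m + 1), (-1 : k) ^ (t : ℕ) • chainVecR k rk N (d.1 ∘ t.succAbove) := by
  simp only [bdryR, Finsupp.lsum_single, LinearMap.toSpanSingleton_apply, one_smul]
  exact Finset.sum_congr rfl fun t _ => congrArg _ (chainVecR_val (delChainR rk d t)).symm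

theorem phiMap_single {F F' : P} (c : DChain P (m + 1) F) :
    phiMap k m F F' (Finsupp.single c 1) =
      if c.1 0 = F' then chainVec k F' (Fin.tail c.1) else 0 := by
  simp only [phiMap, Finsupp.lsum_single, LinearMap.toSpanSingleton_apply, one_smul]
  split_ifs with h
  · exact (chainVec_val _).symm
  · rfl

theorem relabel_single {F F' : P} (c : DChain P 0 F) :
    relabel k F F' (Finsupp.single c 1) = chainVec k F' c.1 := by
  simp only [relabel, Finsupp.lsum_single, LinearMap.toSpanSingleton_apply, one_smul]
  rw [show c.1 = Fin.elim0 from Subsingleton.elim _ _]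
  exact (chainVec_val (F := F') ⟨Fin.elim0, fun a => a.elim0, fun t => t.elim0⟩).symm

theorem extractR_single {F : P} (d : DChainR P rk (m + 1) N) :
    extractR k rk N F (Finsupp.single d 1) =
      if d.1 0 = F then chainVec k F (Fin.tail d.1) else 0 := by
  simp [extractR]

theorem prependR_chainVec {F : P} (f : Fin m → P) :
    prependR k rk N F (chainVec k F f) = chainVecR k rk N (Fin.cons F f) := by
  by_cases hf : IsFace F f
  · obtain ⟨c, rfl⟩ : ∃ c : DChain P m F, c.1 = f := ⟨⟨f, hf⟩, rfl⟩
    rw [chainVec_val, prependR, Finsupp.linearCombination_single, one_smul]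
  · rw [chainVec, dif_neg hf, map_zero, chainVecR, dif_neg]
    rintro ⟨hanti, hval⟩
    obtain ⟨hlt, hanti⟩ := Fin.strictAnti_cons.1 hanti
    exact hf ⟨hanti, fun t => ⟨by simpa using (hval t.succ).1, hlt t⟩⟩

theorem mem_cycles_succ_iff {F : P} {x : CC k (m + 1) F} :
    x ∈ cycles k (m + 1) F ↔ bdry k m F x = 0 :=
  Iff.rfl

theorem embedR_single {F : P} (c : DChain P m F) :
    embedR k rk N F (Finsupp.single c 1) = chainVecR k rk N c.1 := by
  simp [embedR]

theorem prependR_single {F : P} (c : DChain P m F) :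
    prependR k rk N F (Finsupp.single c 1) = chainVecR k rk N (Fin.cons F c.1) := by
  simp [prependR]

theorem ofTruncated_single {G : P} (d : DChainR P rk m N) :
    ofTruncated k rk N G (Finsupp.single d 1) = chainVec k G d.1 := by
  simp [ofTruncated]

theorem bdryR_prependR_single (hrk : StrictMono rk) {F : P} (hb : ⊥ < F) (ht : F < ⊤)
    (hN : rk F < N) (c : DChain P m F) :
    bdryR k rk m N (prependR k rk N F (Finsupp.single c 1)) =
      ∑ t : Fin (m + 1), (-1 : k) ^ (t : ℕ) • chainVecR k rk N (Fin.cons F c.1 ∘ t.succAbove) := by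
  obtain ⟨d, hd⟩ : ∃ d : DChainR P rk (m + 1) N, d.1 = Fin.cons F c.1 :=
    ⟨⟨_, isFaceR_cons hrk hb ht hN c⟩, rfl⟩
  rw [prependR_single, ← hd, chainVecR_val, bdryR_single]

theorem bdryR_prependR (hrk : StrictMono rk) {F : P} (hb : ⊥ < F) (ht : F < ⊤) (hN : rk F < N)
    (x : CC k (m + 1) F) :
    bdryR k rk (m + 1) N (prependR k rk N F x) =
      embedR k rk N F x - prependR k rk N F (bdry k m F x) := by
  refine LinearMap.congr_fun (lhom_ext_single_one (φ := (bdryR k rk (m + 1) N).comp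
    (prependR k rk N F)) (ψ := embedR k rk N F - (prependR k rk N F).comp (bdry k m F))
    fun c => ?_) x
  have hface : ∀ i : Fin (m + 1), (Fin.cons F c.1 ∘ i.succ.succAbove : Fin (m + 1) → P) =
      Fin.cons F (c.1 ∘ i.succAbove) := fun i => Fin.cons_comp_succ_succAbove _ _ _
  rw [LinearMap.comp_apply, bdryR_prependR_single hrk hb ht hN, Fin.sum_univ_succ,
    LinearMap.sub_apply, LinearMap.comp_apply, embedR_single, bdry_single, map_sum]
  simp only [map_smul, prependR_chainVec, Fin.succAbove_zero, Fin.cons_comp_succ, hface,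
    Fin.val_zero, pow_zero, one_smul, Fin.val_succ, pow_succ, mul_neg_one, neg_smul,
    Finset.sum_neg_distrib, sub_eq_add_neg]

theorem bdryR_prependR_of_mem_cycles (hrk : StrictMono rk) {F : P} (hb : ⊥ < F) (ht : F < ⊤)
    (hN : rk F < N) {x : CC k m F} (hx : x ∈ cycles k m F) :
    bdryR k rk m N (prependR k rk N F x) = embedR k rk N F x := by
  cases m with
  | zero =>
    refine LinearMap.congr_fun (lhom_ext_single_one (φ := (bdryR k rk 0 N).comp
      (prependR k rk N F)) (ψ := embedR k rk N F) fun c => ?_) x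
    rw [LinearMap.comp_apply, bdryR_prependR_single hrk hb ht hN, embedR_single]
    simp
  | succ m => rw [bdryR_prependR hrk hb ht hN, mem_cycles_succ_iff.1 hx, map_zero, sub_zero]

theorem extractR_chainVecR_of_ne {F : P} {f : Fin (m + 1) → P} (h : f 0 ≠ F) :
    extractR k rk N F (chainVecR k rk N f) = 0 := by
  by_cases hf : IsFaceR rk N f
  · obtain ⟨d, rfl⟩ : ∃ d : DChainR P rk (m + 1) N, d.1 = f := ⟨⟨f, hf⟩, rfl⟩
    rw [chainVecR_val, extractR_single, if_neg h]
  · rw [chainVecR, dif_neg hf, map_zero]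

theorem extractR_prependR_of_ne {F F' : P} (h : F ≠ F') (x : CC k m F) :
    extractR k rk N F' (prependR k rk N F x) = 0 := by
  refine LinearMap.congr_fun (lhom_ext_single_one (φ := (extractR k rk N F').comp
    (prependR k rk N F)) (ψ := 0) fun c => ?_) x
  rw [LinearMap.comp_apply, prependR_single, extractR_chainVecR_of_ne h, LinearMap.zero_apply]

theorem extractR_prependR_self (hrk : StrictMono rk) {F : P} (hb : ⊥ < F) (ht : F < ⊤)
    (hN : rk F < N) (x : CC k m F) : extractR k rk N F (prependR k rk N F x) = x := by
  refine LinearMap.congr_fun (lhom_ext_single_one (φ := (extractR k rk N F).comp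
    (prependR k rk N F)) (ψ := LinearMap.id) fun c => ?_) x
  obtain ⟨d, hd⟩ : ∃ d : DChainR P rk (m + 1) N, d.1 = Fin.cons F c.1 :=
    ⟨⟨_, isFaceR_cons hrk hb ht hN c⟩, rfl⟩
  rw [LinearMap.comp_apply, prependR_single, ← hd, chainVecR_val, extractR_single, hd,
    Fin.cons_zero, if_pos rfl, Fin.tail_cons, chainVec_val, LinearMap.id_apply]

theorem extractR_embedR (hrk : StrictMono rk) {G F' : P} (hG : rk G ≤ N) (x : CC k (m + 1) G) :
    extractR k rk N F' (embedR k rk N G x) = phiMap k m G F' x := by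
  refine LinearMap.congr_fun (lhom_ext_single_one (φ := (extractR k rk N F').comp
    (embedR k rk N G)) (ψ := phiMap k m G F') fun c => ?_) x
  obtain ⟨d, hd⟩ : ∃ d : DChainR P rk (m + 1) N, d.1 = c.1 := ⟨⟨_, isFaceR_of_rk_le hrk hG c⟩, rfl⟩
  rw [LinearMap.comp_apply, embedR_single, ← hd, chainVecR_val, extractR_single, phiMap_single, hd]

theorem phiMap_eq_zero_of_rk_le (hrk : StrictMono rk) {G F' : P} (h : rk G ≤ rk F') :
    phiMap k m G F' = 0 :=
  lhom_ext_single_one fun c => by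
    rw [phiMap_single, if_neg fun e => h.not_gt (by rw [← e]; exact hrk (c.2.2 0).2),
      LinearMap.zero_apply]

theorem embedR_eq_sum_prependR_phiMap (hrk : StrictMono rk) (hbot : rk ⊥ = 0) {F : P}
    (hF : rk F = m + 2) (x : CC k (m + 1) F) :
    embedR k rk N F x =
      ∑ F' : {F' : P // rk F' = m + 1}, prependR k rk N F'.1 (phiMap k m F F'.1 x) := by
  refine LinearMap.congr_fun (lhom_ext_single_one (φ := embedR k rk N F)
    (ψ := ∑ F' : {F' : P // rk F' = m + 1}, (prependR k rk N F'.1).comp (phiMap k m F F'.1))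
    fun c => ?_) x |>.trans (by simp)
  have hhead : rk (c.1 0) = m + 1 :=
    rk_apply_zero_eq hrk hbot c.2.1 (c.2.2 _).1 (by have := hrk (c.2.2 0).2; omega)
  rw [LinearMap.sum_apply, Fintype.sum_eq_single ⟨c.1 0, hhead⟩ fun F' hF' => by
      rw [LinearMap.comp_apply, phiMap_single, if_neg fun e => hF' (Subtype.ext e.symm),
        map_zero],
    LinearMap.comp_apply, phiMap_single, if_pos rfl, prependR_chainVec, Fin.cons_self_tail,
    embedR_single]

theorem sum_prependR_extractR (hrk : StrictMono rk) (hbot : rk ⊥ = 0)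
    (y : CCR k rk (m + 1) (m + 2)) :
    ∑ G : {G : P // rk G = m + 1}, prependR k rk (m + 2) G.1 (extractR k rk (m + 2) G.1 y) = y := by
  refine (by simp : _ = _).trans (LinearMap.congr_fun (lhom_ext_single_one
    (φ := ∑ G : {G : P // rk G = m + 1}, (prependR k rk (m + 2) G.1).comp
      (extractR k rk (m + 2) G.1)) (ψ := LinearMap.id) fun d => ?_) y)
  have hhead : rk (d.1 0) = m + 1 :=
    rk_apply_zero_eq hrk hbot d.2.1 (d.2.2 _).1 (Nat.le_of_lt_succ (d.2.2 0).2.2)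
  rw [LinearMap.sum_apply, Fintype.sum_eq_single ⟨d.1 0, hhead⟩ fun G hG => by
      rw [LinearMap.comp_apply, extractR_single, if_neg fun e => hG (Subtype.ext e.symm),
        map_zero],
    LinearMap.comp_apply, extractR_single, if_pos rfl, prependR_chainVec, Fin.cons_self_tail,
    chainVecR_val, LinearMap.id_apply]

theorem bdry_ofTruncated (y : CCR k rk (m + 1) N) :
    bdry k m ⊤ (ofTruncated k rk N ⊤ y) = ofTruncated k rk N ⊤ (bdryR k rk m N y) := by
  refine LinearMap.congr_fun (lhom_ext_single_one (φ := (bdry k m ⊤).comp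
    (ofTruncated k rk N ⊤)) (ψ := (ofTruncated k rk N ⊤).comp (bdryR k rk m N)) fun d => ?_) y
  obtain ⟨c, hc⟩ : ∃ c : DChain P (m + 1) ⊤, c.1 = d.1 := ⟨⟨_, isFace_top d⟩, rfl⟩
  have hface : ∀ t : Fin (m + 1), ofTruncated k rk N ⊤ (chainVecR k rk N (d.1 ∘ t.succAbove)) =
      chainVec k ⊤ (d.1 ∘ t.succAbove) := fun t =>
    (congrArg _ (chainVecR_val (delChainR rk d t))).trans (ofTruncated_single _)
  rw [LinearMap.comp_apply, ofTruncated_single, ← hc, chainVec_val, bdry_single,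
    LinearMap.comp_apply, bdryR_single, map_sum]
  simp only [map_smul, hface, hc]

theorem phiMap_ofTruncated {F' : P} (y : CCR k rk (m + 1) N) :
    phiMap k m ⊤ F' (ofTruncated k rk N ⊤ y) = extractR k rk N F' y := by
  refine LinearMap.congr_fun (lhom_ext_single_one (φ := (phiMap k m ⊤ F').comp
    (ofTruncated k rk N ⊤)) (ψ := extractR k rk N F') fun d => ?_) y
  obtain ⟨c, hc⟩ : ∃ c : DChain P (m + 1) ⊤, c.1 = d.1 := ⟨⟨_, isFace_top d⟩, rfl⟩
  rw [LinearMap.comp_apply, ofTruncated_single, ← hc, chainVec_val, phiMap_single, hc,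
    extractR_single]

theorem ofTruncated_embedR (hrk : StrictMono rk) (htop : rk ⊤ ≤ N) (x : CC k m ⊤) :
    ofTruncated k rk N ⊤ (embedR k rk N ⊤ x) = x := by
  refine LinearMap.congr_fun (lhom_ext_single_one (φ := (ofTruncated k rk N ⊤).comp
    (embedR k rk N ⊤)) (ψ := LinearMap.id) fun c => ?_) x
  obtain ⟨d, hd⟩ : ∃ d : DChainR P rk m N, d.1 = c.1 := ⟨⟨_, isFaceR_of_rk_le hrk htop c⟩, rfl⟩
  rw [LinearMap.comp_apply, embedR_single, ← hd, chainVecR_val, ofTruncated_single, hd,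
    chainVec_val, LinearMap.id_apply]

theorem dmap_apply (x : levelMod k rk (j + 1)) (F' : {F : P // rk F = j}) :
    dmap k rk j x F' = ∑ F : {F : P // rk F = j + 1}, step k j F.1 F'.1 (x F) := by
  simp [dmap]

theorem embedR_relabel {F F' : P} (x : CC k 0 F) :
    embedR k rk N F' (relabel k F F' x) = embedR k rk N F x := by
  refine LinearMap.congr_fun (lhom_ext_single_one (φ := (embedR k rk N F').comp
    (relabel k F F')) (ψ := embedR k rk N F) fun c => ?_) x
  obtain ⟨c', hc'⟩ : ∃ c' : DChain P 0 F', c'.1 = c.1 := ⟨⟨_, c.2.1, fun t => t.elim0⟩, rfl⟩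
  rw [LinearMap.comp_apply, relabel_single, ← hc', chainVec_val, embedR_single, embedR_single, hc']

theorem sum_embedR_eq_zero (hrk : StrictMono rk) (hbot : rk ⊥ = 0) {x : levelMod k rk (j + 1)}
    (hdx : dmap k rk j x = 0) :
    ∑ F : {F : P // rk F = j + 1}, embedR k rk N F.1 (x F) = 0 := by
  cases j with
  | zero =>
    calc ∑ F : {F : P // rk F = 1}, embedR k rk N F.1 (x F)
        = embedR k rk N ⊥ (dmap k rk 0 x ⟨⊥, hbot⟩) := by
          rw [dmap_apply, map_sum]
          exact Finset.sum_congr rfl fun F _ => (embedR_relabel _).symm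
      _ = 0 := by rw [hdx]; exact map_zero _
  | succ j =>
    calc ∑ F : {F : P // rk F = j + 2}, embedR k rk N F.1 (x F)
        = ∑ F : {F : P // rk F = j + 2}, ∑ F' : {F' : P // rk F' = j + 1},
            prependR k rk N F'.1 (phiMap k j F.1 F'.1 (x F)) :=
          Finset.sum_congr rfl fun F _ => embedR_eq_sum_prependR_phiMap hrk hbot F.2 _
      _ = ∑ F' : {F' : P // rk F' = j + 1}, prependR k rk N F'.1 (dmap k rk (j + 1) x F') := by
          rw [Finset.sum_comm]
          simp only [dmap_apply, map_sum]
          rfl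
      _ = 0 := by simp [hdx]

theorem bdryR_sumPrependR (hrk : StrictMono rk) (hbot : rk ⊥ = 0) (htop : rk ⊤ = r)
    (hjr : j + 1 < r) {x : levelMod k rk (j + 1)} (hx : x ∈ cyclesSub k rk (j + 1))
    (hdx : dmap k rk j x = 0) : bdryR k rk j (j + 3) (sumPrependR k rk j x) = 0 := by
  rw [sumPrependR, map_sum]
  refine (Finset.sum_congr rfl fun F _ => ?_).trans (sum_embedR_eq_zero hrk hbot hdx)
  have hF := F.2
  exact bdryR_prependR_of_mem_cycles hrk (bot_lt_of_rk_pos hbot (by omega))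
    (lt_top_of_rk_lt htop (by omega)) (by omega) (Submodule.mem_pi.1 hx F (Set.mem_univ _))

theorem extractR_sumPrependR (hrk : StrictMono rk) (hbot : rk ⊥ = 0) (htop : rk ⊤ = r)
    (hjr : j + 1 < r) (x : levelMod k rk (j + 1)) (F' : {F : P // rk F = j + 1}) :
    extractR k rk (j + 3) F'.1 (sumPrependR k rk j x) = x F' := by
  rw [sumPrependR, map_sum, Fintype.sum_eq_single F' fun F hF =>
    extractR_prependR_of_ne (fun e => hF (Subtype.ext e)) _]
  have hF' := F'.2
  exact extractR_prependR_self hrk (bot_lt_of_rk_pos hbot (by omega))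
    (lt_top_of_rk_lt htop (by omega)) (by omega) _

theorem extractR_bdryR_sum_prependR (hrk : StrictMono rk) (hbot : rk ⊥ = 0) (htop : rk ⊤ = r)
    (hmr : m + 2 < r) (hmN : m + 2 < N) (e : ∀ G : {G : P // rk G = m + 2}, CC k (m + 1) G.1)
    (G₀ : {G : P // rk G = m + 2}) :
    extractR k rk N G₀.1 (bdryR k rk (m + 1) N (∑ G, prependR k rk N G.1 (e G))) =
      -bdry k m G₀.1 (e G₀) := by
  have hbdry : ∀ G : {G : P // rk G = m + 2}, bdryR k rk (m + 1) N (prependR k rk N G.1 (e G)) =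
      embedR k rk N G.1 (e G) - prependR k rk N G.1 (bdry k m G.1 (e G)) := fun G => by
    have := G.2
    exact bdryR_prependR hrk (bot_lt_of_rk_pos hbot (by omega)) (lt_top_of_rk_lt htop (by omega))
      (by omega) _
  have hembed : ∀ G : {G : P // rk G = m + 2},
      extractR k rk N G₀.1 (embedR k rk N G.1 (e G)) = 0 := fun G => by
    rw [extractR_embedR hrk (by rw [G.2]; omega), phiMap_eq_zero_of_rk_le hrk (by rw [G.2, G₀.2]),
      LinearMap.zero_apply]
  have := G₀.2
  rw [map_sum, map_sum, Fintype.sum_eq_single G₀ fun G hG => by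
      rw [hbdry, map_sub, hembed, extractR_prependR_of_ne (fun e => hG (Subtype.ext e)), sub_zero],
    hbdry, map_sub, hembed, extractR_prependR_self hrk (bot_lt_of_rk_pos hbot (by omega))
      (lt_top_of_rk_lt htop (by omega)) (by omega), zero_sub]

theorem exists_dmap_eq_of_bdryR_eq (hrk : StrictMono rk) (hbot : rk ⊥ = 0) (htop : rk ⊤ = r)
    (hjr : j + 2 < r) {x : levelMod k rk (j + 1)} {Y : CCR k rk (j + 2) (j + 3)}
    (hY : bdryR k rk (j + 1) (j + 3) Y = sumPrependR k rk j x) :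
    ∃ y ∈ cyclesSub k rk (j + 2), dmap k rk (j + 1) y = x := by
  set e : ∀ G : {G : P // rk G = j + 2}, CC k (j + 1) G.1 := fun G => extractR k rk (j + 3) G.1 Y
  have hYe : Y = ∑ G, prependR k rk (j + 3) G.1 (e G) := (sum_prependR_extractR hrk hbot Y).symm
  have hcyc : ∀ G, e G ∈ cycles k (j + 1) G.1 := fun G => by
    have h := congrArg (extractR k rk (j + 3) G.1) hY
    rw [hYe, extractR_bdryR_sum_prependR hrk hbot htop hjr (by omega), sumPrependR, map_sum,
      Finset.sum_eq_zero fun F _ => extractR_prependR_of_ne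
        (ne_of_apply_ne rk (by rw [F.2, G.2]; omega)) _] at h
    exact neg_eq_zero.1 h
  refine ⟨e, Submodule.mem_pi.2 fun G _ => hcyc G, funext fun F' => ?_⟩
  calc dmap k rk (j + 1) e F'
      = ∑ G, extractR k rk (j + 3) F'.1 (bdryR k rk (j + 1) (j + 3)
          (prependR k rk (j + 3) G.1 (e G))) := by
        rw [dmap_apply]
        refine Finset.sum_congr rfl fun G _ => ?_
        have := G.2
        rw [bdryR_prependR_of_mem_cycles hrk (bot_lt_of_rk_pos hbot (by omega))
          (lt_top_of_rk_lt htop (by omega)) (by omega) (hcyc G), extractR_embedR hrk (by omega)]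
        rfl
    _ = extractR k rk (j + 3) F'.1 (bdryR k rk (j + 1) (j + 3) Y) := by rw [hYe, map_sum, map_sum]
    _ = x F' := by rw [hY, extractR_sumPrependR hrk hbot htop (by omega) x F']

theorem exists_dmap_eq_of_bdryR_eq_zero (hrk : StrictMono rk) (htop : rk ⊤ = j + 2)
    {x : levelMod k rk (j + 1)} {Z : CCR k rk (j + 1) N} (hZ : bdryR k rk j N Z = 0)
    (hZx : ∀ F', extractR k rk N F'.1 Z = x F') :
    ∃ y ∈ cyclesSub k rk (j + 2), dmap k rk (j + 1) y = x := by
  refine ⟨fun G => ofTruncated k rk N G.1 Z, Submodule.mem_pi.2 fun G _ => ?_, funext fun F' => ?_⟩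
  · obtain ⟨G, hG⟩ := G
    obtain rfl := eq_top_of_rk_eq hrk htop hG
    exact mem_cycles_succ_iff.2 ((bdry_ofTruncated Z).trans (by rw [hZ, map_zero]))
  · rw [dmap_apply, Fintype.sum_eq_single ⟨⊤, htop⟩ fun G hG =>
      absurd (Subtype.ext (eq_top_of_rk_eq hrk htop G.2)) hG]
    exact (phiMap_ofTruncated Z).trans (hZx F')

theorem eq_zero_of_dmap_eq_zero (hrk : StrictMono rk) (hbot : rk ⊥ = 0) (htop : rk ⊤ = j + 1)
    {x : levelMod k rk (j + 1)} (hdx : dmap k rk j x = 0) : x = 0 := by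
  funext ⟨F, hF⟩
  obtain rfl := eq_top_of_rk_eq hrk htop hF
  have h := sum_embedR_eq_zero (N := j + 1) hrk hbot hdx
  rw [Fintype.sum_eq_single ⟨⊤, hF⟩ fun G hG =>
    absurd (Subtype.ext (eq_top_of_rk_eq hrk htop G.2)) hG] at h
  rw [← ofTruncated_embedR hrk htop.le (x ⟨⊤, hF⟩), h, map_zero]
  rfl

end

/-- let `P` be a finite graded poset of rank `r` with `0̂` and `1̂`.  If the
reduced homology `H̃_i(Δ(P_(i+3)))` vanishes for all `0 ≤ i ≤ r−3`, then the complex `Z(P)`,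
`0 → Z_{r-2}(Δ(1̂)) → ⊕_{rk F = r-1} Z_{r-3}(Δ(F)) → ⋯ → ⊕_{rk F = 1} Z_{-1}(Δ(F)) → k`,
is exact: its leftmost map is injective and kernels equal images at all intermediate spots. -/
theorem complexZ_exact (r : ℕ)
    (hbot : rk ⊥ = 0) (htop : rk ⊤ = r)
    (hcov : ∀ a b : P, a ⋖ b → rk b = rk a + 1)
    (hH : ∀ i : ℕ, (i : ℤ) ≤ (r : ℤ) - 3 →
      ∀ x : CCR k rk (i + 1) (i + 3), bdryR k rk i (i + 3) x = 0 →
        ∃ y : CCR k rk (i + 2) (i + 3), bdryR k rk (i + 1) (i + 3) y = x) :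
    ∀ j : ℕ, ∀ x ∈ cyclesSub k rk (j + 1), dmap k rk j x = 0 →
      (j + 1 < r → ∃ y ∈ cyclesSub k rk (j + 2), dmap k rk (j + 1) y = x) ∧
      (j + 1 = r → x = 0) := by
  have hrk : StrictMono rk := strictMono_of_rk_covBy hcov
  intro j x hx hdx
  refine ⟨fun hjr => ?_, fun hjr => eq_zero_of_dmap_eq_zero hrk hbot (htop.trans hjr.symm) hdx⟩
  have hZ := bdryR_sumPrependR hrk hbot htop hjr hx hdx
  rcases Nat.lt_or_ge (j + 2) r with hr | hr
  · obtain ⟨Y, hY⟩ := hH j (by omega) _ hZ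
    exact exists_dmap_eq_of_bdryR_eq hrk hbot htop hr hY
  · exact exists_dmap_eq_of_bdryR_eq_zero hrk (by omega) hZ
      (extractR_sumPrependR hrk hbot htop hjr x)

end
end
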